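/- arXiv:2404.10656 — 3 statements merged into one kernel-verified Lean document; each statement's English description precedes it below -/
import Mathlib

section
/- Let M1 and M2 be matroids on E1 and E2 with T = E1 ∩ E2, M1|T = M2|T, and T a modular flat of both M1 and M2, and let M = P_T(M1,M2) with rank function r1 on M1. If H is a hyperplane of M then r1(H ∩ T) ≥ r1(T) − 1, and if F is a corank-2 flat of M then r1(F ∩ T) ≥ r1(T) − 2. -/
open Matroid Set

variable {α : Type*}

/-- The rank of a set `X` in a matroid `M`: the supremum of the cardinalities of the
independent subsets of `X`. -/
noncomputable def mRk (M : Matroid α) (X : Set α) : ℕ :=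
  sSup {n : ℕ | ∃ I, M.Indep I ∧ I ⊆ X ∧ I.ncard = n}

/-- The rank of a matroid `M`. -/
noncomputable def mRank (M : Matroid α) : ℕ := mRk M M.E

/-- `T` is a modular flat of `M`: `T` is a flat and
`r(T) + r(F) = r(T ∩ F) + r(T ∪ F)` holds for every flat `F` of `M`. -/
def IsModFlat (M : Matroid α) (T : Set α) : Prop :=
  M.IsFlat T ∧ ∀ F, M.IsFlat F → mRk M T + mRk M F = mRk M (T ∩ F) + mRk M (T ∪ F)

/-- `H` is a hyperplane of `M`: a flat of rank `r(M) - 1`. -/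
def IsHyp (M : Matroid α) (H : Set α) : Prop :=
  M.IsFlat H ∧ mRk M H + 1 = mRank M

/-- `F` is a corank-2 flat of `M`: a flat of rank `r(M) - 2`. -/
def IsCr2Flat (M : Matroid α) (F : Set α) : Prop :=
  M.IsFlat F ∧ mRk M F + 2 = mRank M

/-- `F` is a corank-3 flat of `M`: a flat of rank `r(M) - 3`. -/
def IsCr3Flat (M : Matroid α) (F : Set α) : Prop :=
  M.IsFlat F ∧ mRk M F + 3 = mRank M

/-- `(H1, H2, H3)` is a modular triple of hyperplanes of `M`: the three sets are
hyperplanes, `F = H1 ∩ H2 ∩ H3` is a corank-2 flat, and `Hi ∩ Hj = F` for all `i ≠ j`. -/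
def ModTriple (M : Matroid α) (H1 H2 H3 : Set α) : Prop :=
  IsHyp M H1 ∧ IsHyp M H2 ∧ IsHyp M H3 ∧
  IsCr2Flat M (H1 ∩ H2 ∩ H3) ∧
  H1 ∩ H2 = H1 ∩ H2 ∩ H3 ∧ H1 ∩ H3 = H1 ∩ H2 ∩ H3 ∧ H2 ∩ H3 = H1 ∩ H2 ∩ H3

/-- `M` is the generalized parallel connection of `M1` and `M2`: its ground set is
`M1.E ∪ M2.E`, and its flats are exactly the sets `F ⊆ M1.E ∪ M2.E` such that
`F ∩ M1.E` is a flat of `M1` and `F ∩ M2.E` is a flat of `M2`. -/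
def IsGPC (M1 M2 M : Matroid α) : Prop :=
  M.E = M1.E ∪ M2.E ∧
    ∀ F : Set α, M.IsFlat F ↔ F ⊆ M1.E ∪ M2.E ∧ M1.IsFlat (F ∩ M1.E) ∧ M2.IsFlat (F ∩ M2.E)

/-- The deletion `M \ D` of a set `D` from `M`. -/
def mDelete (M : Matroid α) (D : Set α) : Matroid α := M ↾ (M.E \ D)

/-- The contraction `M / C`, obtained via duality as `(M✶ \ C)✶`. -/
def mContract (M : Matroid α) (C : Set α) : Matroid α := (M✶ ↾ (M.E \ C))✶

/-- `N` is a minor of `M`: `N` is obtained from `M` by a contraction followed by a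
deletion. -/
def MinorOf (N M : Matroid α) : Prop :=
  ∃ C D : Set α, C ⊆ M.E ∧ D ⊆ M.E ∧ Disjoint C D ∧
    N = (mContract M C) ↾ ((M.E \ C) \ D)

/-- `C` is a circuit of `M`: a minimal dependent subset of the ground set. -/
def MCircuit (M : Matroid α) (C : Set α) : Prop :=
  C ⊆ M.E ∧ ¬ M.Indep C ∧ ∀ D ⊂ C, M.Indep D

/-- `e` is a loop of `M`. -/
def MLoop (M : Matroid α) (e : α) : Prop := e ∈ M.E ∧ ¬ M.Indep {e}

/-- `e` is a coloop of `M`: an element of the ground set lying in every base. -/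
def MColoop (M : Matroid α) (e : α) : Prop := e ∈ M.E ∧ ∀ B, M.IsBase B → e ∈ B

/-- `M` is simple: every subset of the ground set with at most two elements is
independent; equivalently, `M` has no loops and no two-element circuits. -/
def MSimple (M : Matroid α) : Prop := ∀ S ⊆ M.E, S.ncard ≤ 2 → M.Indep S

/-- `X` is co-independent in `M`: the complement `M.E \ X` is spanning. -/
def MCoindep (M : Matroid α) (X : Set α) : Prop := M.Spanning (M.E \ X)

/-- The connected component of `M` containing `e`: the set of `f` in the ground set with
`e = f` or some circuit containing both `e` and `f`. -/
def MComponentOf (M : Matroid α) (e : α) : Set α :=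
  {f | f ∈ M.E ∧ (e = f ∨ ∃ C, MCircuit M C ∧ e ∈ C ∧ f ∈ C)}

/-- `K` is a connected component of `M`. -/
def MComponent (M : Matroid α) (K : Set α) : Prop :=
  ∃ e ∈ M.E, K = MComponentOf M e

/-- The restriction `M|X` is (isomorphic to) the rank-2 uniform matroid `U_{2,n}`:
`X` is an `n`-element subset of the ground set and a subset of `X` is independent
exactly when it has at most 2 elements. -/
def RestrIsU2 (M : Matroid α) (X : Set α) (n : ℕ) : Prop :=
  X ⊆ M.E ∧ X.ncard = n ∧ ∀ S ⊆ X, (M.Indep S ↔ S.ncard ≤ 2)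

/-- `Θ` is a copy of the matroid `Θ_n`, with `X = {x 1, …, x n}` and `Y = {y 1, …, y n}`
disjoint, whose bases are exactly `Y`, the sets `(Y \ {y i}) ∪ {x j}` for `i ≠ j`, and
the sets `(Y \ Y') ∪ X'` with `Y' ⊆ Y`, `X' ⊆ X`, `|Y'| = |X'| = 2`. -/
def IsTheta (n : ℕ) (x y : Fin n → α) (Θ : Matroid α) : Prop :=
  Function.Injective x ∧ Function.Injective y ∧ (∀ i j, x i ≠ y j) ∧
  Θ.E = Set.range x ∪ Set.range y ∧
  ∀ B : Set α, Θ.IsBase B ↔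
    (B = Set.range y ∨
    (∃ i j, i ≠ j ∧ B = (Set.range y \ {y i}) ∪ {x j}) ∨
    (∃ P Q : Set (Fin n), P.ncard = 2 ∧ Q.ncard = 2 ∧
      B = (Set.range y \ (y '' P)) ∪ x '' Q))

/-- `M` is representable over the field `K`: there is a map from the ground set to a
`K`-vector space under which a subset of the ground set is independent in `M` exactly
when its image (as a family) is linearly independent. -/
def RepOver (K : Type*) [Field K] {α : Type*} (M : Matroid α) : Prop :=
  ∃ (V : Type) (_ : AddCommGroup V) (_ : Module K V) (φ : α → V),
    ∀ I ⊆ M.E, (M.Indep I ↔ LinearIndependent K (fun e : I => φ e.1))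

section Aux

variable {M : Matroid α} {I J X Y K L S R F T : Set α} {e : α}

lemma aux_closure_flat (M : Matroid α) (X : Set α) : M.IsFlat (M.closure X) := by
  refine ⟨fun J Y hJ hJY => ?_, M.closure_subset_ground X⟩
  have h1 : M.closure J = M.closure X := by
    have := hJ.closure_eq_closure
    rwa [closure_closure] at this
  exact hJY.subset_closure.trans (by rw [h1])

lemma aux_flat_of_closure_subset (h : M.closure F ⊆ F) (hF : F ⊆ M.E) : M.IsFlat F := by
  have h2 : M.closure F = F := h.antisymm (M.subset_closure F hF)
  rw [← h2]; exact aux_closure_flat M F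

lemma aux_flat_inter (hK : M.IsFlat K) (hL : M.IsFlat L) : M.IsFlat (K ∩ L) := by
  refine aux_flat_of_closure_subset (subset_inter ?_ ?_) (inter_subset_left.trans hK.subset_ground)
  · exact (M.closure_subset_closure inter_subset_left).trans hK.closure.subset
  · exact (M.closure_subset_closure inter_subset_right).trans hL.closure.subset

lemma aux_ncard_le_mRk [M.Finite] (hI : M.Indep I) (hIX : I ⊆ X) : I.ncard ≤ mRk M X := by
  refine le_csSup ⟨M.E.ncard, ?_⟩ ⟨I, hI, hIX, rfl⟩
  rintro n ⟨J, hJ, -, rfl⟩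
  exact ncard_le_ncard hJ.subset_ground M.ground_finite

lemma aux_mRk_eq_ncard [M.Finite] (hI : M.IsBasis' I X) : mRk M X = I.ncard := by
  refine le_antisymm (csSup_le ⟨0, ∅, M.empty_indep, empty_subset X, by simp⟩ ?_)
    (aux_ncard_le_mRk hI.indep hI.subset)
  rintro n ⟨J, hJ, hJX, rfl⟩
  obtain ⟨I', hI', hJI'⟩ := hJ.subset_isBasis'_of_subset hJX
  have h1 : I'.ncard = I.ncard :=
    (isBase_restrict_iff'.mpr hI').ncard_eq_ncard_of_isBase (isBase_restrict_iff'.mpr hI)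
  exact (ncard_le_ncard hJI' (M.set_finite I' hI'.indep.subset_ground)).trans h1.le

lemma aux_mRk_mono [M.Finite] (h : X ⊆ Y) : mRk M X ≤ mRk M Y := by
  obtain ⟨I, hI⟩ := M.exists_isBasis' X
  rw [aux_mRk_eq_ncard hI]
  exact aux_ncard_le_mRk hI.indep (hI.subset.trans h)

lemma aux_mRk_closure (M : Matroid α) [M.Finite] (X : Set α) :
    mRk M (M.closure X) = mRk M X := by
  obtain ⟨I, hI⟩ := M.exists_isBasis' X
  rw [aux_mRk_eq_ncard hI, aux_mRk_eq_ncard hI.isBasis_closure_right.isBasis']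

lemma aux_mRk_le_of_subset_closure [M.Finite] (h : X ⊆ M.closure Y) :
    mRk M X ≤ mRk M Y :=
  (aux_mRk_mono h).trans_eq (aux_mRk_closure M Y)

lemma aux_mRk_insert_le [M.Finite] : mRk M (insert e X) ≤ mRk M X + 1 := by
  obtain ⟨I, hI⟩ := M.exists_isBasis' (insert e X)
  rw [aux_mRk_eq_ncard hI]
  have h1 : I \ {e} ⊆ X := by
    rw [diff_subset_iff]
    simpa [union_comm] using hI.subset
  have h2 : (I \ {e}).ncard ≤ mRk M X := aux_ncard_le_mRk (hI.indep.subset diff_subset) h1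
  have hfin := M.set_finite I hI.indep.subset_ground
  have h3 : I ⊆ insert e (I \ {e}) := by
    intro x hx
    by_cases hxe : x = e
    · exact hxe ▸ mem_insert _ _
    · exact mem_insert_of_mem _ ⟨hx, hxe⟩
  have h4 : I.ncard ≤ (I \ {e}).ncard + 1 :=
    (ncard_le_ncard h3 ((hfin.diff (t := {e})).insert e)).trans (ncard_insert_le _ _)
  omega

lemma aux_mRk_union_le [M.Finite] (hS : S.Finite) :
    mRk M (X ∪ S) ≤ mRk M X + S.ncard := by
  refine Set.Finite.induction_on (motive := fun s _ => mRk M (X ∪ s) ≤ mRk M X + s.ncard) S hS (by simp) ?_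
  intro a s has hs ih
  · rw [union_insert, ncard_insert_of_notMem has hs]
    calc mRk M (insert a (X ∪ s)) ≤ mRk M (X ∪ s) + 1 := aux_mRk_insert_le
      _ ≤ mRk M X + s.ncard + 1 := by omega

lemma aux_mRk_insert_of_not_mem_closure [M.Finite] (he : e ∈ M.E) (hecl : e ∉ M.closure X) :
    mRk M X + 1 ≤ mRk M (insert e X) := by
  obtain ⟨I, hI⟩ := M.exists_isBasis' X
  have hcl : M.closure I = M.closure X := hI.closure_eq_closure
  have heI : e ∉ I := fun h =>
    hecl (by rw [← hcl]; exact M.subset_closure I hI.indep.subset_ground h)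
  have hind : M.Indep (insert e I) :=
    (hI.indep.insert_indep_iff_of_notMem heI).mpr ⟨he, by rwa [hcl]⟩
  have h1 : (insert e I).ncard = I.ncard + 1 :=
    ncard_insert_of_notMem heI (M.set_finite I hI.indep.subset_ground)
  rw [aux_mRk_eq_ncard hI, ← h1]
  exact aux_ncard_le_mRk hind (insert_subset_insert hI.subset)

lemma aux_flat_rank_lt [M.Finite] (hK : M.IsFlat K) (hKL : K ⊂ L) (hL : L ⊆ M.E) :
    mRk M K + 1 ≤ mRk M L := by
  obtain ⟨e, heL, heK⟩ := exists_of_ssubset hKL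
  have h1 : mRk M K + 1 ≤ mRk M (insert e K) :=
    aux_mRk_insert_of_not_mem_closure (hL heL) (by rwa [hK.closure])
  exact h1.trans (aux_mRk_mono (insert_subset heL hKL.subset))

lemma aux_flat_eq_of_mRk_le [M.Finite] (hK : M.IsFlat K) (hL : M.IsFlat L) (hKL : K ⊆ L)
    (h : mRk M L ≤ mRk M K) : K = L := by
  by_contra hne
  have := aux_flat_rank_lt hK (hKL.ssubset_of_ne hne) hL.subset_ground
  omega

lemma aux_mRk_restrict (M : Matroid α) (hSR : S ⊆ R) : mRk (M ↾ R) S = mRk M S := by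
  unfold mRk
  congr 1
  ext n
  constructor
  · rintro ⟨I, hI, hIS, rfl⟩
    exact ⟨I, (restrict_indep_iff.mp hI).1, hIS, rfl⟩
  · rintro ⟨I, hI, hIS, rfl⟩
    exact ⟨I, restrict_indep_iff.mpr ⟨hI, hIS.trans hSR⟩, hIS, rfl⟩

lemma aux_closure_restrict (M : Matroid α) (hT : M.IsFlat T) (hS : S ⊆ T) :
    (M ↾ T).closure S = M.closure S := by
  obtain ⟨I, hI⟩ := M.exists_isBasis S (hS.trans hT.subset_ground)
  have hIT : I ⊆ T := hI.subset.trans hS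
  have hIr : (M ↾ T).IsBasis I S := (isBasis_restrict_iff hT.subset_ground).mpr ⟨hI, hS⟩
  rw [← hIr.closure_eq_closure, ← hI.closure_eq_closure]
  have hIri : (M ↾ T).Indep I := restrict_indep_iff.mpr ⟨hI.indep, hIT⟩
  have hclT : M.closure I ⊆ T := (M.closure_subset_closure hIT).trans hT.closure.subset
  ext x
  rw [hIri.mem_closure_iff', hI.indep.mem_closure_iff', restrict_indep_iff, restrict_ground_eq]
  constructor
  · rintro ⟨hxT, h2⟩
    exact ⟨hT.subset_ground hxT, fun hind => h2 ⟨hind, insert_subset hxT hIT⟩⟩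
  · rintro ⟨hxE, h2⟩
    refine ⟨?_, fun hind => h2 hind.1⟩
    have : x ∈ M.closure I := (hI.indep.mem_closure_iff').mpr ⟨hxE, h2⟩
    exact hclT this

end Aux

lemma aux_trace_closure_eq (M' : Matroid α) [M'.Finite] (T F' K : Set α)
    (hmod : IsModFlat M' T) (hF' : M'.IsFlat F') (hK : M'.IsFlat K)
    (hFK : T ∩ F' ⊆ K) (hKT : K ⊆ T) (k : ℕ)
    (hrk : mRk M' K = mRk M' (T ∩ F') + k) :
    T ∩ M'.closure (F' ∪ K) = K := by
  set B := M'.closure (F' ∪ K) with hBdef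
  have hTE : T ⊆ M'.E := hmod.1.subset_ground
  have hFE : F' ⊆ M'.E := hF'.subset_ground
  have hKE : K ⊆ M'.E := hKT.trans hTE
  have hBflat : M'.IsFlat B := aux_closure_flat M' _
  have hKB : K ⊆ B := subset_union_right.trans (M'.subset_closure _ (union_subset hFE hKE))
  have hFB : F' ⊆ B := subset_union_left.trans (M'.subset_closure _ (union_subset hFE hKE))
  have hub : mRk M' (T ∪ B) = mRk M' (T ∪ F') := by
    apply le_antisymm
    · apply aux_mRk_le_of_subset_closure
      apply union_subset
      · exact subset_union_left.trans (M'.subset_closure _ (union_subset hTE hFE))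
      · exact M'.closure_subset_closure
          (union_subset (subset_union_right) (hKT.trans subset_union_left))
    · exact aux_mRk_mono (union_subset_union_right T hFB)
  obtain ⟨I, hI⟩ := M'.exists_isBasis' (T ∩ F')
  obtain ⟨J, hJ, hIJ⟩ := hI.indep.subset_isBasis'_of_subset (hI.subset.trans hFK)
  have hJfin : J.Finite := M'.set_finite J hJ.indep.subset_ground
  have hIcard : I.ncard = mRk M' (T ∩ F') := (aux_mRk_eq_ncard hI).symm
  have hJcard : J.ncard = mRk M' (T ∩ F') + k := by rw [← hrk, aux_mRk_eq_ncard hJ]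
  have hBle : mRk M' B ≤ mRk M' F' + k := by
    have h1 : mRk M' B = mRk M' (F' ∪ K) := aux_mRk_closure M' _
    have h2 : F' ∪ K ⊆ M'.closure (F' ∪ J) := by
      apply union_subset
      · exact subset_union_left.trans
          (M'.subset_closure _ (union_subset hFE hJ.indep.subset_ground))
      · exact (hJ.isBasis hKE).subset_closure.trans
          (M'.closure_subset_closure subset_union_right)
    have h3 : mRk M' (F' ∪ K) ≤ mRk M' (F' ∪ J) := aux_mRk_le_of_subset_closure h2
    have h4 : F' ∪ J ⊆ (F' ∪ I) ∪ (J \ I) := by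
      intro x hx
      by_cases hxI : x ∈ I
      · exact Or.inl (Or.inr hxI)
      · rcases hx with h | h
        · exact Or.inl (Or.inl h)
        · exact Or.inr ⟨h, hxI⟩
    have h5 : mRk M' (F' ∪ J) ≤ mRk M' ((F' ∪ I) ∪ (J \ I)) := aux_mRk_mono h4
    have h6 : mRk M' ((F' ∪ I) ∪ (J \ I)) ≤ mRk M' (F' ∪ I) + (J \ I).ncard :=
      aux_mRk_union_le (hJfin.diff (t := I))
    have h7 : F' ∪ I = F' := union_eq_self_of_subset_right (hI.subset.trans inter_subset_right)
    have h8 : (J \ I).ncard = k := by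
      rw [ncard_diff hIJ (hJfin.subset hIJ)]; omega
    have h7' : mRk M' (F' ∪ I) = mRk M' F' := by rw [h7]
    omega
  have hmodF := hmod.2 F' hF'
  have hmodB := hmod.2 B hBflat
  rw [hub] at hmodB
  have hTB_ge : mRk M' (T ∩ F') + k ≤ mRk M' (T ∩ B) := by
    rw [← hrk]; exact aux_mRk_mono (subset_inter hKT hKB)
  have hfin : mRk M' (T ∩ B) ≤ mRk M' K := by omega
  exact (aux_flat_eq_of_mRk_le hK (aux_flat_inter hmod.1 hBflat)
    (subset_inter hKT hKB) hfin).symm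

lemma aux_key (M1 M2 M : Matroid α) [M1.Finite] [M2.Finite] (T : Set α)
    (hT : T = M1.E ∩ M2.E) (hres : M1 ↾ T = M2 ↾ T)
    (hmod1 : IsModFlat M1 T) (hmod2 : IsModFlat M2 T) (hM : IsGPC M1 M2 M)
    (F : Set α) (hF : M.IsFlat F) :
    mRk M F + mRk M1 T ≤ mRank M + mRk M1 (F ∩ T) := by
  haveI hMfin : M.Finite := ⟨by rw [hM.1]; exact M1.ground_finite.union M2.ground_finite⟩
  have hT1 : T ⊆ M1.E := by rw [hT]; exact inter_subset_left
  have hT2 : T ⊆ M2.E := by rw [hT]; exact inter_subset_right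
  obtain ⟨hFE, hF1, hF2⟩ := (hM.2 F).mp hF
  set a := mRk M1 (F ∩ T) with ha
  set t := mRk M1 T with ht'
  have hat : a ≤ t := aux_mRk_mono inter_subset_right
  have htrans_cl : ∀ S, S ⊆ T → M1.closure S = M2.closure S := fun S hS => by
    rw [← aux_closure_restrict M1 hmod1.1 hS, ← aux_closure_restrict M2 hmod2.1 hS, hres]
  have htrans_rk : ∀ S, S ⊆ T → mRk M1 S = mRk M2 S := fun S hS => by
    rw [← aux_mRk_restrict M1 hS, hres, aux_mRk_restrict M2 hS]
  have hFT1 : T ∩ (F ∩ M1.E) = F ∩ T := by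
    ext x; simp only [mem_inter_iff]
    exact ⟨fun ⟨h1, h2, _⟩ => ⟨h2, h1⟩, fun ⟨h1, h2⟩ => ⟨h2, h1, hT1 h2⟩⟩
  have hFT2 : T ∩ (F ∩ M2.E) = F ∩ T := by
    ext x; simp only [mem_inter_iff]
    exact ⟨fun ⟨h1, h2, _⟩ => ⟨h2, h1⟩, fun ⟨h1, h2⟩ => ⟨h2, h1, hT2 h2⟩⟩
  set G := fun K => M1.closure ((F ∩ M1.E) ∪ K) ∪ M2.closure ((F ∩ M2.E) ∪ K) with hG
  have hGprop : ∀ K k, M1.IsFlat K → M2.IsFlat K → F ∩ T ⊆ K → K ⊆ T → mRk M1 K = a + k →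
      M.IsFlat (G K) ∧ G K ∩ T = K ∧ G K ⊆ M.E := by
    intro K k hK1 hK2 hFK hKT hrkK
    have hKE1 : K ⊆ M1.E := hKT.trans hT1
    have hKE2 : K ⊆ M2.E := hKT.trans hT2
    set B := M1.closure ((F ∩ M1.E) ∪ K) with hB
    set C := M2.closure ((F ∩ M2.E) ∪ K) with hC
    have hBT : T ∩ B = K :=
      aux_trace_closure_eq M1 T (F ∩ M1.E) K hmod1 hF1 hK1
        (by rw [hFT1]; exact hFK) hKT k (by rw [hFT1]; exact hrkK)
    have hrkK2 : mRk M2 K = mRk M2 (T ∩ (F ∩ M2.E)) + k := by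
      rw [← htrans_rk K hKT, hFT2, ← htrans_rk (F ∩ T) inter_subset_right]; exact hrkK
    have hCT : T ∩ C = K :=
      aux_trace_closure_eq M2 T (F ∩ M2.E) K hmod2 hF2 hK2
        (by rw [hFT2]; exact hFK) hKT k hrkK2
    have hBE : B ⊆ M1.E := M1.closure_subset_ground _
    have hCE : C ⊆ M2.E := M2.closure_subset_ground _
    have hKB : K ⊆ B :=
      subset_union_right.trans (M1.subset_closure _ (union_subset inter_subset_right hKE1))
    have hKC : K ⊆ C :=
      subset_union_right.trans (M2.subset_closure _ (union_subset inter_subset_right hKE2))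
    have hGE1 : (B ∪ C) ∩ M1.E = B := by
      apply subset_antisymm
      · rintro x ⟨hx, hxE1⟩
        rcases hx with h | h
        · exact h
        · have hxT : x ∈ T := by rw [hT]; exact ⟨hxE1, hCE h⟩
          exact hKB (hCT ▸ show x ∈ T ∩ C from ⟨hxT, h⟩)
      · exact subset_inter subset_union_left hBE
    have hGE2 : (B ∪ C) ∩ M2.E = C := by
      apply subset_antisymm
      · rintro x ⟨hx, hxE2⟩
        rcases hx with h | h
        · have hxT : x ∈ T := by rw [hT]; exact ⟨hBE h, hxE2⟩
          exact hKC (hBT ▸ show x ∈ T ∩ B from ⟨hxT, h⟩)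
        · exact h
      · exact subset_inter subset_union_right hCE
    have hGsub : B ∪ C ⊆ M1.E ∪ M2.E :=
      union_subset (hBE.trans subset_union_left) (hCE.trans subset_union_right)
    have hGflat : M.IsFlat (B ∪ C) := (hM.2 _).mpr
      ⟨hGsub, by rw [hGE1]; exact aux_closure_flat M1 _, by rw [hGE2]; exact aux_closure_flat M2 _⟩
    refine ⟨hGflat, ?_, by rw [hM.1]; exact hGsub⟩
    have e1 : B ∩ T = K := by rw [inter_comm]; exact hBT
    have e2 : C ∩ T = K := by rw [inter_comm]; exact hCT
    rw [union_inter_distrib_right, e1, e2, union_self]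
  have main : ∀ k, a + k ≤ t → ∃ K, M1.IsFlat K ∧ M2.IsFlat K ∧ F ∩ T ⊆ K ∧ K ⊆ T ∧
      mRk M1 K = a + k ∧ mRk M F + k ≤ mRk M (G K) := by
    intro k
    induction k with
    | zero =>
      intro _
      have hfl1 : M1.IsFlat (F ∩ T) := by rw [← hFT1]; exact aux_flat_inter hmod1.1 hF1
      have hfl2 : M2.IsFlat (F ∩ T) := by rw [← hFT2]; exact aux_flat_inter hmod2.1 hF2
      refine ⟨F ∩ T, hfl1, hfl2, Subset.rfl, inter_subset_right, by omega, ?_⟩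
      have hFsub : F ⊆ G (F ∩ T) := by
        intro x hx
        rcases hFE hx with h | h
        · exact Or.inl (M1.subset_closure _
            (union_subset inter_subset_right ((inter_subset_right.trans hT1)))
            (Or.inl ⟨hx, h⟩))
        · exact Or.inr (M2.subset_closure _
            (union_subset inter_subset_right ((inter_subset_right.trans hT2)))
            (Or.inl ⟨hx, h⟩))
      simpa using aux_mRk_mono hFsub
    | succ k ih =>
      intro hk1
      obtain ⟨K, hK1, hK2, hFK, hKT, hrkK, hGrk⟩ := ih (by omega)
      obtain ⟨e, heT, heK⟩ : ∃ e ∈ T, e ∉ K := by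
        by_contra h; push_neg at h
        have hKeq : K = T := hKT.antisymm h
        rw [hKeq] at hrkK; omega
      set K' := M1.closure (insert e K) with hK'
      have hiK : insert e K ⊆ T := insert_subset heT hKT
      have hK'T : K' ⊆ T := (M1.closure_subset_closure hiK).trans hmod1.1.closure.subset
      have hK'1 : M1.IsFlat K' := aux_closure_flat M1 _
      have hK'2 : M2.IsFlat K' := by
        rw [hK', htrans_cl _ hiK]; exact aux_closure_flat M2 _
      have hKK' : K ⊆ K' :=
        (subset_insert e K).trans (M1.subset_closure _ (hiK.trans hT1))
      have hFK' : F ∩ T ⊆ K' := hFK.trans hKK'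
      have hrkK' : mRk M1 K' = a + (k + 1) := by
        have e1 : mRk M1 K' = mRk M1 (insert e K) := aux_mRk_closure M1 _
        have e2 : mRk M1 (insert e K) ≤ mRk M1 K + 1 := aux_mRk_insert_le
        have e3 : mRk M1 K + 1 ≤ mRk M1 (insert e K) :=
          aux_mRk_insert_of_not_mem_closure (hT1 heT) (by rw [hK1.closure]; exact heK)
        omega
      obtain ⟨hGf, hGT, hGE⟩ := hGprop K k hK1 hK2 hFK hKT hrkK
      obtain ⟨hGf', hGT', hGE'⟩ := hGprop K' (k + 1) hK'1 hK'2 hFK' hK'T hrkK'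
      have hsub : G K ⊆ G K' := by
        apply union_subset_union
        · exact M1.closure_subset_closure (union_subset_union_right _ hKK')
        · exact M2.closure_subset_closure (union_subset_union_right _ hKK')
      have heG' : e ∈ G K' := by
        apply Or.inl
        exact M1.subset_closure _ (union_subset inter_subset_right (hK'T.trans hT1))
          (Or.inr (M1.subset_closure _ (hiK.trans hT1) (mem_insert e K)))
      have heG : e ∉ G K := fun h => heK (hGT ▸ show e ∈ G K ∩ T from ⟨h, heT⟩)
      have hss : G K ⊂ G K' := hsub.ssubset_of_ne (fun h => heG (h ▸ heG'))
      have hlt : mRk M (G K) + 1 ≤ mRk M (G K') := aux_flat_rank_lt hGf hss hGE'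
      exact ⟨K', hK'1, hK'2, hFK', hK'T, hrkK', by omega⟩
  obtain ⟨K, _, _, _, hKT, _, hGrk⟩ := main (t - a) (by omega)
  obtain ⟨hGf, hGT, hGE⟩ := hGprop K (t - a) (by assumption) (by assumption) (by assumption)
    hKT (by assumption)
  have h2 : mRk M (G K) ≤ mRank M := aux_mRk_mono hGE
  omega

/-- If `T` is a modular flat of both `M1` and `M2` and
`M = P_T(M1, M2)`, then `r1(H ∩ T) ≥ r1(T) − 1` for every hyperplane `H` of `M`, and
`r1(F ∩ T) ≥ r1(T) − 2` for every corank-2 flat `F` of `M`. -/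
theorem gpc_trace_rank_bounds (M1 M2 M : Matroid α) [M1.Finite] [M2.Finite]
    (E1 E2 T : Set α) (hE1 : M1.E = E1) (hE2 : M2.E = E2) (hT : T = E1 ∩ E2)
    (hres : M1 ↾ T = M2 ↾ T) (hmod1 : IsModFlat M1 T) (hmod2 : IsModFlat M2 T)
    (hM : IsGPC M1 M2 M) :
    (∀ H : Set α, IsHyp M H → mRk M1 T ≤ mRk M1 (H ∩ T) + 1) ∧
    (∀ F : Set α, IsCr2Flat M F → mRk M1 T ≤ mRk M1 (F ∩ T) + 2) := by
  subst hE1; subst hE2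
  constructor
  · intro H hH
    have h1 := aux_key M1 M2 M T hT hres hmod1 hmod2 hM H hH.1
    have h2 := hH.2
    omega
  · intro F hF
    have h1 := aux_key M1 M2 M T hT hres hmod1 hmod2 hM F hF.1
    have h2 := hF.2
    omega
end

section
/- For every n ≥ 2, a subset H of the ground set X ∪ Y of Θ_n is a hyperplane of Θ_n if and only if: (1) H = (Y − {y_i}) ∪ {x_i} for some i ∈ [n]; or (2) H = (Y − {y_i, y_j}) ∪ {x_k} for distinct i,j,k ∈ [n]; or (3) H = (X ∪ Y) − {y_i, y_j, y_k} for distinct i,j,k ∈ [n]. -/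
open Matroid Set

variable {α : Type*}

namespace ThetaAux

variable {α : Type*} {n : ℕ} {x y : Fin n → α} {Θ : Matroid α}

def thS (x y : Fin n → α) (A B : Set (Fin n)) : Set α := x '' A ∪ y '' B

lemma flat_closure (M : Matroid α) (X : Set α) : M.IsFlat (M.closure X) := by
  rw [Matroid.closure_def, sInter_eq_iInter]
  haveI : Nonempty {F // F ∈ {F | M.IsFlat F ∧ X ∩ M.E ⊆ F}} :=
    ⟨⟨M.E, M.ground_isFlat, inter_subset_right⟩⟩
  exact Matroid.IsFlat.iInter fun F => F.2.1

section basics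

variable (hx : Function.Injective x) (hy : Function.Injective y)
  (hxy : ∀ i j, x i ≠ y j)

include hx hxy in
lemma mem_thS_x {A B : Set (Fin n)} {k : Fin n} : x k ∈ thS x y A B ↔ k ∈ A := by
  constructor
  · rintro (⟨i, hi, he⟩ | ⟨i, hi, he⟩)
    · rwa [← hx he]
    · exact absurd he.symm (hxy k i)
  · exact fun h => Or.inl ⟨k, h, rfl⟩

include hy hxy in
lemma mem_thS_y {A B : Set (Fin n)} {k : Fin n} : y k ∈ thS x y A B ↔ k ∈ B := by
  constructor
  · rintro (⟨i, hi, he⟩ | ⟨i, hi, he⟩)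
    · exact absurd he (hxy i k)
    · rwa [← hy he]
  · exact fun h => Or.inr ⟨k, h, rfl⟩

lemma thS_subset_E (A B : Set (Fin n)) : thS x y A B ⊆ range x ∪ range y :=
  union_subset_union (image_subset_range _ _) (image_subset_range _ _)

include hx hy hxy in
lemma thS_subset_iff {A B A' B' : Set (Fin n)} :
    thS x y A B ⊆ thS x y A' B' ↔ A ⊆ A' ∧ B ⊆ B' := by
  constructor
  · intro h
    exact ⟨fun k hk => (mem_thS_x hx hxy).1 (h ((mem_thS_x hx hxy).2 hk)),
      fun k hk => (mem_thS_y hy hxy).1 (h ((mem_thS_y hy hxy).2 hk))⟩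
  · rintro ⟨h1, h2⟩
    exact union_subset_union (image_mono h1) (image_mono h2)

include hx hy hxy in
lemma thS_eq_iff {A B A' B' : Set (Fin n)} :
    thS x y A B = thS x y A' B' ↔ A = A' ∧ B = B' := by
  rw [subset_antisymm_iff, thS_subset_iff hx hy hxy, thS_subset_iff hx hy hxy]
  constructor
  · rintro ⟨⟨h1, h2⟩, h3, h4⟩
    exact ⟨h1.antisymm h3, h2.antisymm h4⟩
  · rintro ⟨rfl, rfl⟩
    exact ⟨⟨le_rfl, le_rfl⟩, le_rfl, le_rfl⟩

lemma insert_x_thS (A B : Set (Fin n)) (k : Fin n) :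
    insert (x k) (thS x y A B) = thS x y (insert k A) B := by
  rw [thS, thS, image_insert_eq, insert_union]

lemma insert_y_thS (A B : Set (Fin n)) (k : Fin n) :
    insert (y k) (thS x y A B) = thS x y A (insert k B) := by
  simp only [thS, image_insert_eq]
  rw [union_comm (x '' A), ← insert_union, union_comm]

include hx hy hxy in
lemma ncard_thS (A B : Set (Fin n)) : (thS x y A B).ncard = A.ncard + B.ncard := by
  rw [thS, ncard_union_eq ?_ ((A.toFinite.image x)) ((B.toFinite.image y)),
    ncard_image_of_injective _ hx, ncard_image_of_injective _ hy]
  rw [disjoint_left]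
  rintro e ⟨i, _, rfl⟩ ⟨j, _, h⟩
  exact hxy i j h.symm

lemma decomp {H : Set α} (hH : H ⊆ range x ∪ range y) :
    H = thS x y {i | x i ∈ H} {i | y i ∈ H} := by
  ext e
  constructor
  · intro he
    rcases hH he with ⟨i, rfl⟩ | ⟨i, rfl⟩
    · exact Or.inl ⟨i, he, rfl⟩
    · exact Or.inr ⟨i, he, rfl⟩
  · rintro (⟨i, hi, rfl⟩ | ⟨i, hi, rfl⟩) <;> exact hi

include hy in
lemma range_diff_image (P : Set (Fin n)) : range y \ y '' P = y '' Pᶜ := by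
  rw [compl_eq_univ_diff, image_diff hy, image_univ]

include hy in
lemma conv2 (i j : Fin n) : (range y \ {y i}) ∪ {x j} = thS x y {j} ({i}ᶜ) := by
  rw [← image_singleton (f := y), range_diff_image hy, ← image_singleton (f := x),
    thS, union_comm]

include hy in
lemma conv3 (P Q : Set (Fin n)) : (range y \ y '' P) ∪ x '' Q = thS x y Q Pᶜ := by
  rw [range_diff_image hy, thS, union_comm]

lemma conv1 : (range y : Set α) = thS x y ∅ univ := by
  simp [thS]

include hy hxy in
lemma conv4 (P : Set (Fin n)) :
    (range x ∪ range y) \ (y '' P) = thS x y univ Pᶜ := by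
  rw [union_diff_distrib, range_diff_image hy, thS, image_univ]
  congr 1
  refine Disjoint.sdiff_eq_left ?_
  rw [disjoint_left]
  rintro e ⟨i, rfl⟩ ⟨j, _, h⟩
  exact hxy i j h.symm

include hy in
lemma conv2' (i j : Fin n) :
    (range y \ {y i, y j}) ∪ {x k} = thS x y {k} ({i, j}ᶜ) := by
  rw [show ({y i, y j} : Set α) = y '' {i, j} by simp [image_insert_eq],
    range_diff_image hy, ← image_singleton (f := x), thS, union_comm]

include hy hxy in
lemma conv3' (i j k : Fin n) :
    (range x ∪ range y) \ {y i, y j, y k} = thS x y univ ({i, j, k}ᶜ) := by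
  rw [show ({y i, y j, y k} : Set α) = y '' {i, j, k} by simp [image_insert_eq],
    conv4 hy hxy]

end basics

lemma ncard_compl_fin (B : Set (Fin n)) : B.ncard + Bᶜ.ncard = n := by
  rw [ncard_add_ncard_compl]
  simp [Nat.card_eq_fintype_card]

lemma ncard_compl_singleton (i : Fin n) : ({i}ᶜ : Set (Fin n)).ncard + 1 = n := by
  have := ncard_compl_fin ({i} : Set (Fin n))
  simp only [ncard_singleton] at this
  omega

lemma ncard_compl_pair {i j : Fin n} (hij : i ≠ j) :
    ({i, j}ᶜ : Set (Fin n)).ncard + 2 = n := by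
  have := ncard_compl_fin ({i, j} : Set (Fin n))
  rw [ncard_pair hij] at this
  omega

lemma ncard_triple {i j k : Fin n} (hij : i ≠ j) (hik : i ≠ k) (hjk : j ≠ k) :
    ({i, j, k} : Set (Fin n)).ncard = 3 := by
  rw [ncard_insert_of_notMem (by simp [hij, hik]) (toFinite _), ncard_pair hjk]

lemma ncard_compl_triple {i j k : Fin n} (hij : i ≠ j) (hik : i ≠ k) (hjk : j ≠ k) :
    ({i, j, k}ᶜ : Set (Fin n)).ncard + 3 = n := by
  have := ncard_compl_fin ({i, j, k} : Set (Fin n))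
  rw [ncard_triple hij hik hjk] at this
  omega


section bases

variable (hΘ : IsTheta n x y Θ)
include hΘ

lemma base_thS {A B : Set (Fin n)} :
    Θ.IsBase (thS x y A B) ↔
      (A = ∅ ∧ B = univ) ∨
      (∃ i j, i ≠ j ∧ A = {j} ∧ B = {i}ᶜ) ∨
      (∃ P Q : Set (Fin n), P.ncard = 2 ∧ Q.ncard = 2 ∧ A = Q ∧ B = Pᶜ) := by
  obtain ⟨hx, hy, hxy, hE, hB⟩ := hΘ
  rw [hB]
  constructor
  · rintro (h | ⟨i, j, hij, h⟩ | ⟨P, Q, hP, hQ, h⟩)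
    · rw [conv1, thS_eq_iff hx hy hxy] at h
      exact Or.inl h
    · rw [conv2 hy, thS_eq_iff hx hy hxy] at h
      exact Or.inr (Or.inl ⟨i, j, hij, h⟩)
    · rw [conv3 hy, thS_eq_iff hx hy hxy] at h
      exact Or.inr (Or.inr ⟨P, Q, hP, hQ, h⟩)
  · rintro (⟨rfl, rfl⟩ | ⟨i, j, hij, rfl, rfl⟩ | ⟨P, Q, hP, hQ, hA, hB'⟩)
    · exact Or.inl conv1.symm
    · exact Or.inr (Or.inl ⟨i, j, hij, (conv2 hy i j).symm⟩)
    · exact Or.inr (Or.inr ⟨P, Q, hP, hQ, by rw [hA, hB', conv3 hy]⟩)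

lemma base_y : Θ.IsBase (range y) := (hΘ.2.2.2.2 _).2 (Or.inl rfl)

lemma base_ncard {B0 : Set α} (hB0 : Θ.IsBase B0) : B0.ncard = n := by
  obtain ⟨hx, hy, hxy, hE, hB⟩ := hΘ
  rcases (hB B0).1 hB0 with h | ⟨i, j, hij, h⟩ | ⟨P, Q, hP, hQ, h⟩
  · rw [h, conv1, ncard_thS hx hy hxy]
    simp [ncard_univ]
  · rw [h, conv2 hy, ncard_thS hx hy hxy, ncard_singleton]
    have := ncard_compl_singleton i
    omega
  · rw [h, conv3 hy, ncard_thS hx hy hxy, hQ]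
    have := ncard_compl_fin P
    omega

lemma indep_ncard_le {I : Set α} (hI : Θ.Indep I) : I.ncard ≤ n := by
  obtain ⟨B0, hB0, hIB⟩ := hI.exists_isBase_superset
  have hfin : B0.Finite :=
    (((finite_range x).union (finite_range y)).subset (hΘ.2.2.2.1 ▸ hB0.subset_ground))
  exact (ncard_le_ncard hIB hfin).trans (base_ncard hΘ hB0).le

lemma indep_thS {A B : Set (Fin n)} :
    Θ.Indep (thS x y A B) ↔
      A.ncard ≤ 2 ∧
        (A = ∅ ∨ B.ncard + 2 ≤ n ∨ (A.ncard = 1 ∧ ∃ m, m ∉ A ∧ m ∉ B)) := by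
  have hx := hΘ.1; have hy := hΘ.2.1; have hxy := hΘ.2.2.1
  constructor
  · intro hI
    obtain ⟨B0, hB0, hsub⟩ := hI.exists_isBase_superset
    rcases (base_thS hΘ (A := {i | x i ∈ B0}) (B := {i | y i ∈ B0})).1
        (by rwa [← decomp (hB0.subset_ground.trans_eq hΘ.2.2.2.1)]) with
      ⟨hA0, hB0'⟩ | ⟨i, j, hij, hA0, hB0'⟩ | ⟨P, Q, hP, hQ, hA0, hB0'⟩
    all_goals
      rw [decomp (hB0.subset_ground.trans_eq hΘ.2.2.2.1), hA0, hB0',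
        thS_subset_iff hx hy hxy] at hsub
    · rw [subset_empty_iff] at hsub
      exact ⟨by simp [hsub.1], Or.inl hsub.1⟩
    · rcases subset_singleton_iff_eq.1 hsub.1 with rfl | rfl
      · exact ⟨by simp, Or.inl rfl⟩
      · refine ⟨by simp, Or.inr (Or.inr ⟨ncard_singleton j, i, by simp [hij], ?_⟩)⟩
        intro hiB
        exact (hsub.2 hiB) rfl
    · refine ⟨(ncard_le_ncard hsub.1 (toFinite _)).trans_eq hQ, Or.inr (Or.inl ?_)⟩
      have h1 := ncard_le_ncard hsub.2 (toFinite _)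
      have h2 := ncard_compl_fin P
      omega
  · rintro ⟨hA2, rfl | hb | ⟨hA1, m, hmA, hmB⟩⟩
    · rw [Matroid.indep_iff]
      refine ⟨range y, base_y hΘ, ?_⟩
      rw [conv1, thS_subset_iff hx hy hxy]
      exact ⟨le_rfl, subset_univ B⟩
    · have h2 : (2 : ℕ) ≤ n := by omega
      obtain ⟨Q, hAQ, -, hQ⟩ := exists_subsuperset_card_eq (subset_univ A) hA2
        (by rw [ncard_univ]; simpa [Nat.card_eq_fintype_card] using h2)
      have hBc : 2 ≤ (Bᶜ : Set (Fin n)).ncard := by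
        have := ncard_compl_fin B
        omega
      obtain ⟨P, -, hPB, hP⟩ := exists_subsuperset_card_eq (empty_subset Bᶜ)
        (by simp) hBc
      rw [Matroid.indep_iff]
      refine ⟨thS x y Q Pᶜ, (base_thS hΘ).2 (Or.inr (Or.inr ⟨P, Q, hP, hQ, rfl, rfl⟩)), ?_⟩
      rw [thS_subset_iff hx hy hxy]
      exact ⟨hAQ, subset_compl_comm.1 hPB⟩
    · obtain ⟨j, rfl⟩ := ncard_eq_one.1 hA1
      have hmj : m ≠ j := by simpa using hmA
      rw [Matroid.indep_iff]
      refine ⟨thS x y {j} ({m}ᶜ),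
        (base_thS hΘ).2 (Or.inr (Or.inl ⟨m, j, hmj, rfl, rfl⟩)), ?_⟩
      rw [thS_subset_iff hx hy hxy]
      refine ⟨le_rfl, fun b hb => ?_⟩
      simp only [mem_compl_iff, mem_singleton_iff]
      rintro rfl
      exact hmB hb

end bases


section rank

lemma mRk_le_of (M : Matroid α) (S : Set α) (k : ℕ)
    (h : ∀ I, M.Indep I → I ⊆ S → I.ncard ≤ k) : mRk M S ≤ k := by
  have hne : {m : ℕ | ∃ I, M.Indep I ∧ I ⊆ S ∧ I.ncard = m}.Nonempty :=
    ⟨0, ∅, M.empty_indep, empty_subset _, ncard_empty _⟩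
  unfold mRk
  apply csSup_le hne
  rintro m ⟨I, hI, hIS, rfl⟩
  exact h I hI hIS

variable (hΘ : IsTheta n x y Θ)
include hΘ

lemma bddAbove_mRkSet (S : Set α) :
    BddAbove {m : ℕ | ∃ I, Θ.Indep I ∧ I ⊆ S ∧ I.ncard = m} := by
  refine ⟨n, ?_⟩
  rintro m ⟨I, hI, -, rfl⟩
  exact indep_ncard_le hΘ hI

lemma ncard_le_mRk {I S : Set α} (hI : Θ.Indep I) (hIS : I ⊆ S) :
    I.ncard ≤ mRk Θ S :=
  le_csSup (bddAbove_mRkSet hΘ S) ⟨I, hI, hIS, rfl⟩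

lemma mRk_attained (S : Set α) : ∃ I, Θ.Indep I ∧ I ⊆ S ∧ I.ncard = mRk Θ S := by
  have hne : {m : ℕ | ∃ I, Θ.Indep I ∧ I ⊆ S ∧ I.ncard = m}.Nonempty :=
    ⟨0, ∅, Θ.empty_indep, empty_subset _, ncard_empty _⟩
  exact Nat.sSup_mem hne (bddAbove_mRkSet hΘ S)

lemma mRank_eq : mRank Θ = n := by
  unfold mRank
  refine le_antisymm (mRk_le_of _ _ _ fun I hI _ => indep_ncard_le hΘ hI) ?_
  have hbase := base_y hΘ
  have h := ncard_le_mRk hΘ hbase.indep hbase.subset_ground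
  rwa [base_ncard hΘ hbase] at h

lemma closure_indep {I : Set α} (hI : Θ.Indep I) :
    Θ.closure I = {e | e ∈ range x ∪ range y ∧ (Θ.Indep (insert e I) → e ∈ I)} := by
  ext e
  rw [mem_setOf_eq, ← hΘ.2.2.2.1]
  exact hI.mem_closure_iff'

lemma indep_subset_thS {J : Set α} {A B : Set (Fin n)} (hJS : J ⊆ thS x y A B) :
    ∃ A' B', A' ⊆ A ∧ B' ⊆ B ∧ J = thS x y A' B' := by
  have hx := hΘ.1; have hy := hΘ.2.1; have hxy := hΘ.2.2.1
  have hJE : J ⊆ range x ∪ range y := hJS.trans (thS_subset_E _ _)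
  refine ⟨{i | x i ∈ J}, {i | y i ∈ J}, ?_, ?_, decomp hJE⟩
  · exact fun k hk => (mem_thS_x hx hxy).1 (hJS hk)
  · exact fun k hk => (mem_thS_y hy hxy).1 (hJS hk)

end rank


lemma insert_compl_pair {i j : Fin n} (hij : i ≠ j) :
    insert i ({i, j}ᶜ : Set (Fin n)) = {j}ᶜ := by
  ext m
  simp only [mem_insert_iff, mem_compl_iff, mem_singleton_iff, not_or]
  constructor
  · rintro (rfl | ⟨h1, h2⟩)
    · exact hij
    · exact h2
  · intro h
    rcases eq_or_ne m i with rfl | hmi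
    · exact Or.inl rfl
    · exact Or.inr ⟨hmi, h⟩

section closures

variable (hΘ : IsTheta n x y Θ)
include hΘ

lemma cl0 (i : Fin n) :
    Θ.closure (thS x y ∅ ({i}ᶜ)) = thS x y {i} ({i}ᶜ) := by
  have hx := hΘ.1; have hy := hΘ.2.1; have hxy := hΘ.2.2.1
  have hI : Θ.Indep (thS x y ∅ ({i}ᶜ)) := (indep_thS hΘ).2 ⟨by simp, Or.inl rfl⟩
  rw [closure_indep hΘ hI]
  ext e
  simp only [mem_setOf_eq]
  constructor
  · rintro ⟨(⟨m, rfl⟩ | ⟨m, rfl⟩), himp⟩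
    · rcases eq_or_ne m i with rfl | hmi
      · exact (mem_thS_x hx hxy).2 rfl
      · exfalso
        have hind : Θ.Indep (insert (x m) (thS x y ∅ ({i}ᶜ))) := by
          rw [insert_x_thS]
          refine (indep_thS hΘ).2 ⟨by simp, Or.inr (Or.inr ⟨by simp, i, ?_, by simp⟩)⟩
          simp [Ne.symm hmi]
        have h := (mem_thS_x hx hxy).1 (himp hind)
        simp at h
    · rcases eq_or_ne m i with rfl | hmi
      · exfalso
        have hind : Θ.Indep (insert (y m) (thS x y ∅ ({m}ᶜ))) := by
          rw [insert_y_thS]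
          exact (indep_thS hΘ).2 ⟨by simp, Or.inl rfl⟩
        have h := (mem_thS_y hy hxy).1 (himp hind)
        simp at h
      · exact (mem_thS_y hy hxy).2 (by simp [hmi])
  · rintro (⟨m, hm, rfl⟩ | ⟨m, hm, rfl⟩)
    · simp only [mem_singleton_iff] at hm
      subst hm
      refine ⟨Or.inl (mem_range_self m), fun hind => ?_⟩
      exfalso
      rw [insert_x_thS, indep_thS hΘ] at hind
      obtain ⟨-, h | h | ⟨-, m', hm'1, hm'2⟩⟩ := hind
      · simp at h
      · have := ncard_compl_singleton m
        omega
      · simp only [mem_insert_iff, mem_compl_iff, mem_singleton_iff, not_not] at hm'1 hm'2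
        exact hm'1 (Or.inl hm'2)
    · exact ⟨Or.inr (mem_range_self m), fun _ => Or.inr ⟨m, hm, rfl⟩⟩

lemma cl1 {i j k : Fin n} (hij : i ≠ j) (hki : k ≠ i) (hkj : k ≠ j) :
    Θ.closure (thS x y {k} ({i, j}ᶜ)) = thS x y {k} ({i, j}ᶜ) := by
  have hx := hΘ.1; have hy := hΘ.2.1; have hxy := hΘ.2.2.1
  have hcp := ncard_compl_pair hij
  have hI : Θ.Indep (thS x y {k} ({i, j}ᶜ)) :=
    (indep_thS hΘ).2 ⟨by simp, Or.inr (Or.inr ⟨by simp, i, by simp [Ne.symm hki], by simp⟩)⟩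
  rw [closure_indep hΘ hI]
  ext e
  simp only [mem_setOf_eq]
  constructor
  · rintro ⟨(⟨m, rfl⟩ | ⟨m, rfl⟩), himp⟩
    · rcases eq_or_ne m k with rfl | hmk
      · exact (mem_thS_x hx hxy).2 rfl
      · apply himp
        rw [insert_x_thS]
        refine (indep_thS hΘ).2 ⟨?_, Or.inr (Or.inl (by omega))⟩
        rw [show insert m ({k} : Set (Fin n)) = {m, k} from rfl, ncard_pair hmk]
    · by_cases hm : m ∈ ({i, j}ᶜ : Set (Fin n))
      · exact (mem_thS_y hy hxy).2 hm
      · apply himp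
        rw [insert_y_thS]
        simp only [mem_compl_iff, not_not, mem_insert_iff, mem_singleton_iff] at hm
        rcases hm with rfl | rfl
        · rw [insert_compl_pair hij]
          exact (indep_thS hΘ).2
            ⟨by simp, Or.inr (Or.inr ⟨by simp, j, by simp [Ne.symm hkj], by simp⟩)⟩
        · rw [pair_comm i m, insert_compl_pair hij.symm]
          exact (indep_thS hΘ).2
            ⟨by simp, Or.inr (Or.inr ⟨by simp, i, by simp [Ne.symm hki], by simp⟩)⟩
  · intro he
    exact ⟨thS_subset_E _ _ he, fun _ => he⟩

lemma cl1i {i j : Fin n} (hij : i ≠ j) :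
    Θ.closure (thS x y {i} ({i, j}ᶜ)) = thS x y {i} ({i}ᶜ) := by
  have hx := hΘ.1; have hy := hΘ.2.1; have hxy := hΘ.2.2.1
  have hcp := ncard_compl_pair hij
  have hcs := ncard_compl_singleton i
  have hI : Θ.Indep (thS x y {i} ({i, j}ᶜ)) :=
    (indep_thS hΘ).2 ⟨by simp, Or.inr (Or.inr ⟨by simp, j, by simp [hij.symm], by simp⟩)⟩
  rw [closure_indep hΘ hI]
  ext e
  simp only [mem_setOf_eq]
  constructor
  · rintro ⟨(⟨m, rfl⟩ | ⟨m, rfl⟩), himp⟩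
    · rcases eq_or_ne m i with rfl | hmi
      · exact (mem_thS_x hx hxy).2 rfl
      · exfalso
        have hind : Θ.Indep (insert (x m) (thS x y {i} ({i, j}ᶜ))) := by
          rw [insert_x_thS]
          refine (indep_thS hΘ).2 ⟨?_, Or.inr (Or.inl (by omega))⟩
          rw [show insert m ({i} : Set (Fin n)) = {m, i} from rfl, ncard_pair hmi]
        have h := (mem_thS_x hx hxy).1 (himp hind)
        rw [mem_singleton_iff] at h
        exact hmi h
    · rcases eq_or_ne m i with rfl | hmi
      · exfalso
        have hind : Θ.Indep (insert (y m) (thS x y {m} ({m, j}ᶜ))) := by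
          rw [insert_y_thS, insert_compl_pair hij]
          exact (indep_thS hΘ).2
            ⟨by simp, Or.inr (Or.inr ⟨by simp, j, by simp [hij.symm], by simp⟩)⟩
        have h := (mem_thS_y hy hxy).1 (himp hind)
        simp at h
      · exact (mem_thS_y hy hxy).2 (by simp [hmi])
  · rintro (⟨m, hm, rfl⟩ | ⟨m, hm, rfl⟩)
    · simp only [mem_singleton_iff] at hm
      subst hm
      exact ⟨Or.inl (mem_range_self m), fun _ => (mem_thS_x hx hxy).2 rfl⟩
    · simp only [mem_compl_iff, mem_singleton_iff] at hm
      refine ⟨Or.inr (mem_range_self m), fun hind => ?_⟩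
      by_cases hmj : m = j
      · subst hmj
        exfalso
        rw [insert_y_thS, pair_comm i m, insert_compl_pair hij.symm, indep_thS hΘ] at hind
        obtain ⟨-, h | h | ⟨-, m', hm'1, hm'2⟩⟩ := hind
        · simp at h
        · omega
        · simp only [mem_compl_iff, mem_singleton_iff, not_not] at hm'1 hm'2
          exact hm'1 hm'2
      · exact (mem_thS_y hy hxy).2 (by simp [hm, hmj])
  -- note: hm'1 : m' ∉ {i}, hm'2 : m' ∉ {i}ᶜ

lemma cl2 {A : Set (Fin n)} {i j k : Fin n} (hA : A.ncard = 2)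
    (hij : i ≠ j) (hik : i ≠ k) (hjk : j ≠ k) :
    Θ.closure (thS x y A ({i, j, k}ᶜ)) = thS x y univ ({i, j, k}ᶜ) := by
  have hx := hΘ.1; have hy := hΘ.2.1; have hxy := hΘ.2.2.1
  have hct := ncard_compl_triple hij hik hjk
  have hI : Θ.Indep (thS x y A ({i, j, k}ᶜ)) :=
    (indep_thS hΘ).2 ⟨hA.le, Or.inr (Or.inl (by omega))⟩
  rw [closure_indep hΘ hI]
  ext e
  simp only [mem_setOf_eq]
  constructor
  · rintro ⟨(⟨m, rfl⟩ | ⟨m, rfl⟩), himp⟩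
    · exact (mem_thS_x hx hxy).2 (mem_univ m)
    · by_cases hm : m ∈ ({i, j, k}ᶜ : Set (Fin n))
      · exact (mem_thS_y hy hxy).2 hm
      · exfalso
        have hind : Θ.Indep (insert (y m) (thS x y A ({i, j, k}ᶜ))) := by
          rw [insert_y_thS]
          refine (indep_thS hΘ).2 ⟨hA.le, Or.inr (Or.inl ?_)⟩
          rw [ncard_insert_of_notMem hm (toFinite _)]
          omega
        exact hm ((mem_thS_y hy hxy).1 (himp hind))
  · rintro (⟨m, -, rfl⟩ | ⟨m, hm, rfl⟩)
    · refine ⟨Or.inl (mem_range_self m), fun hind => ?_⟩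
      by_cases hmA : m ∈ A
      · exact (mem_thS_x hx hxy).2 hmA
      · exfalso
        rw [insert_x_thS, indep_thS hΘ] at hind
        have h3 : (insert m A).ncard = 3 := by
          rw [ncard_insert_of_notMem hmA (toFinite _), hA]
        omega
    · exact ⟨Or.inr (mem_range_self m), fun _ => (mem_thS_y hy hxy).2 hm⟩

end closures


section ranks

variable (hΘ : IsTheta n x y Θ)
include hΘ

lemma rk_H1 (i : Fin n) : mRk Θ (thS x y {i} ({i}ᶜ)) + 1 = n := by
  have hx := hΘ.1; have hy := hΘ.2.1; have hxy := hΘ.2.2.1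
  have hcs := ncard_compl_singleton i
  have hle : mRk Θ (thS x y {i} ({i}ᶜ)) ≤ ({i}ᶜ : Set (Fin n)).ncard := by
    apply mRk_le_of
    intro J hJ hJS
    obtain ⟨A', B', hA', hB', rfl⟩ := indep_subset_thS hΘ hJS
    rw [ncard_thS hx hy hxy]
    have hB'le := ncard_le_ncard hB' (toFinite _)
    rcases subset_singleton_iff_eq.1 hA' with rfl | rfl
    · simpa using hB'le
    · rw [indep_thS hΘ] at hJ
      obtain ⟨-, h | h | ⟨-, m, hm1, hm2⟩⟩ := hJ
      · simp at h
      · rw [ncard_singleton]; omega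
      · have hne : B' ≠ ({i}ᶜ : Set (Fin n)) := by
          rintro rfl
          exact hm2 (by simpa using hm1)
        have := ncard_lt_ncard (hB'.ssubset_of_ne hne) (toFinite _)
        rw [ncard_singleton]
        omega
  have hge : ({i}ᶜ : Set (Fin n)).ncard ≤ mRk Θ (thS x y {i} ({i}ᶜ)) := by
    have hI : Θ.Indep (thS x y ∅ ({i}ᶜ)) := (indep_thS hΘ).2 ⟨by simp, Or.inl rfl⟩
    have h := ncard_le_mRk hΘ (S := thS x y {i} ({i}ᶜ)) hI
      ((thS_subset_iff hx hy hxy).2 ⟨empty_subset _, Subset.rfl⟩)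
    rwa [ncard_thS hx hy hxy, ncard_empty, zero_add] at h
  omega

lemma rk_H2 {i j k : Fin n} (hij : i ≠ j) (hki : k ≠ i) (hkj : k ≠ j) :
    mRk Θ (thS x y {k} ({i, j}ᶜ)) + 1 = n := by
  have hx := hΘ.1; have hy := hΘ.2.1; have hxy := hΘ.2.2.1
  have hcp := ncard_compl_pair hij
  have hle : mRk Θ (thS x y {k} ({i, j}ᶜ)) ≤ 1 + ({i, j}ᶜ : Set (Fin n)).ncard := by
    apply mRk_le_of
    intro J hJ hJS
    obtain ⟨A', B', hA', hB', rfl⟩ := indep_subset_thS hΘ hJS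
    rw [ncard_thS hx hy hxy]
    have h1 := ncard_le_ncard hA' (toFinite _)
    have h2 := ncard_le_ncard hB' (toFinite _)
    rw [ncard_singleton] at h1
    omega
  have hge : 1 + ({i, j}ᶜ : Set (Fin n)).ncard ≤ mRk Θ (thS x y {k} ({i, j}ᶜ)) := by
    have hI : Θ.Indep (thS x y {k} ({i, j}ᶜ)) :=
      (indep_thS hΘ).2
        ⟨by simp, Or.inr (Or.inr ⟨by simp, i, by simp [Ne.symm hki], by simp⟩)⟩
    have h := ncard_le_mRk hΘ hI Subset.rfl
    rwa [ncard_thS hx hy hxy, ncard_singleton] at h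
  omega

lemma rk_H3 {i j k : Fin n} (hij : i ≠ j) (hik : i ≠ k) (hjk : j ≠ k) :
    mRk Θ (thS x y univ ({i, j, k}ᶜ)) + 1 = n := by
  have hx := hΘ.1; have hy := hΘ.2.1; have hxy := hΘ.2.2.1
  have hct := ncard_compl_triple hij hik hjk
  have hle : mRk Θ (thS x y univ ({i, j, k}ᶜ)) ≤ 2 + ({i, j, k}ᶜ : Set (Fin n)).ncard := by
    apply mRk_le_of
    intro J hJ hJS
    obtain ⟨A', B', hA', hB', rfl⟩ := indep_subset_thS hΘ hJS
    rw [ncard_thS hx hy hxy]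
    have h1 := ((indep_thS hΘ).1 hJ).1
    have h2 := ncard_le_ncard hB' (toFinite _)
    omega
  have hge : 2 + ({i, j, k}ᶜ : Set (Fin n)).ncard ≤ mRk Θ (thS x y univ ({i, j, k}ᶜ)) := by
    obtain ⟨Q, -, -, hQ⟩ := exists_subsuperset_card_eq (n := 2)
      (empty_subset (univ : Set (Fin n)))
      (by simp) (by rw [ncard_univ, Nat.card_eq_fintype_card, Fintype.card_fin]; omega)
    have hI : Θ.Indep (thS x y Q ({i, j, k}ᶜ)) :=
      (indep_thS hΘ).2 ⟨hQ.le, Or.inr (Or.inl (by omega))⟩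
    have h := ncard_le_mRk hΘ hI
      ((thS_subset_iff hx hy hxy).2 ⟨subset_univ Q, Subset.rfl⟩)
    rwa [ncard_thS hx hy hxy, hQ] at h
  omega

lemma isHyp_H1 (i : Fin n) : IsHyp Θ (thS x y {i} ({i}ᶜ)) := by
  constructor
  · have h := flat_closure Θ (thS x y ∅ ({i}ᶜ))
    rwa [cl0 hΘ i] at h
  · rw [mRank_eq hΘ]
    exact rk_H1 hΘ i

lemma isHyp_H2 {i j k : Fin n} (hij : i ≠ j) (hki : k ≠ i) (hkj : k ≠ j) :
    IsHyp Θ (thS x y {k} ({i, j}ᶜ)) := by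
  constructor
  · have h := flat_closure Θ (thS x y {k} ({i, j}ᶜ))
    rwa [cl1 hΘ hij hki hkj] at h
  · rw [mRank_eq hΘ]
    exact rk_H2 hΘ hij hki hkj

lemma isHyp_H3 {i j k : Fin n} (hij : i ≠ j) (hik : i ≠ k) (hjk : j ≠ k) :
    IsHyp Θ (thS x y univ ({i, j, k}ᶜ)) := by
  have hct := ncard_compl_triple hij hik hjk
  constructor
  · obtain ⟨Q, -, -, hQ⟩ := exists_subsuperset_card_eq (n := 2)
      (empty_subset (univ : Set (Fin n)))
      (by simp) (by rw [ncard_univ, Nat.card_eq_fintype_card, Fintype.card_fin]; omega)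
    have h := flat_closure Θ (thS x y Q ({i, j, k}ᶜ))
    rwa [cl2 hΘ hQ hij hik hjk] at h
  · rw [mRank_eq hΘ]
    exact rk_H3 hΘ hij hik hjk

end ranks

end ThetaAux

open ThetaAux

/-- The hyperplanes of `Θ_n` for `n ≥ 2`. -/
theorem theta_hyperplanes (n : ℕ) (hn : 2 ≤ n) (x y : Fin n → α) (Θ : Matroid α)
    (hΘ : IsTheta n x y Θ) :
    ∀ H ⊆ Set.range x ∪ Set.range y, (IsHyp Θ H ↔
      (∃ i, H = (Set.range y \ {y i}) ∪ {x i}) ∨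
      (∃ i j k, i ≠ j ∧ i ≠ k ∧ j ≠ k ∧ H = (Set.range y \ {y i, y j}) ∪ {x k}) ∨
      (∃ i j k, i ≠ j ∧ i ≠ k ∧ j ≠ k ∧
        H = (Set.range x ∪ Set.range y) \ {y i, y j, y k})) := by
  intro H hH
  have hx := hΘ.1; have hy := hΘ.2.1; have hxy := hΘ.2.2.1
  constructor
  · rintro ⟨hflat, hrk⟩
    rw [mRank_eq hΘ] at hrk
    obtain ⟨I, hI, hIH, hIcard⟩ := mRk_attained hΘ H
    have hHcl : H = Θ.closure I := by
      refine Subset.antisymm ?_ ((Θ.closure_subset_closure hIH).trans_eq hflat.closure)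
      intro e heH
      rw [hI.mem_closure_iff']
      refine ⟨hflat.subset_ground heH, fun hind => ?_⟩
      by_contra heI
      have hIfin : I.Finite := ((finite_range x).union (finite_range y)).subset (hIH.trans hH)
      have h2 := ncard_le_mRk hΘ hind (insert_subset heH hIH)
      rw [ncard_insert_of_notMem heI hIfin, hIcard] at h2
      omega
    have hIE : I ⊆ range x ∪ range y := hIH.trans hH
    have hIeq : I = thS x y {m | x m ∈ I} {m | y m ∈ I} := decomp hIE
    set A' := {m | x m ∈ I} with hA'def
    set B' := {m | y m ∈ I} with hB'def
    rw [hIeq] at hI hIcard hHcl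
    rw [ncard_thS hx hy hxy] at hIcard
    have hA2 : A'.ncard ≤ 2 := ((indep_thS hΘ).1 hI).1
    have hcompl := ncard_compl_fin B'
    rcases Nat.lt_or_ge A'.ncard 1 with h0 | h1
    · -- A' empty
      have hA'e : A' = ∅ := (ncard_eq_zero (toFinite _)).1 (by omega)
      rw [hA'e, ncard_empty, zero_add] at hIcard
      have hBc : (B'ᶜ).ncard = 1 := by omega
      obtain ⟨i, hi⟩ := ncard_eq_one.1 hBc
      have hB'eq : B' = ({i}ᶜ : Set (Fin n)) := by rw [← compl_compl B', hi]
      rw [hA'e, hB'eq, cl0 hΘ i] at hHcl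
      exact Or.inl ⟨i, by rw [conv2 hy i i]; exact hHcl⟩
    rcases Nat.lt_or_ge A'.ncard 2 with h1' | h2
    · -- A'.ncard = 1
      obtain ⟨k, hk⟩ := ncard_eq_one.1 (by omega : A'.ncard = 1)
      rw [hk, ncard_singleton] at hIcard
      have hBc : (B'ᶜ).ncard = 2 := by omega
      obtain ⟨i, j, hij, hijeq⟩ := ncard_eq_two.1 hBc
      have hB'eq : B' = ({i, j}ᶜ : Set (Fin n)) := by rw [← compl_compl B', hijeq]
      rw [hk, hB'eq] at hHcl
      by_cases hki : k = i
      · subst hki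
        rw [cl1i hΘ hij] at hHcl
        exact Or.inl ⟨k, by rw [conv2 hy k k]; exact hHcl⟩
      by_cases hkj : k = j
      · subst hkj
        rw [pair_comm i k, cl1i hΘ (Ne.symm hij)] at hHcl
        exact Or.inl ⟨k, by rw [conv2 hy k k]; exact hHcl⟩
      rw [cl1 hΘ hij hki hkj] at hHcl
      exact Or.inr (Or.inl ⟨i, j, k, hij, Ne.symm hki, Ne.symm hkj,
        by rw [conv2' hy i j]; exact hHcl⟩)
    · -- A'.ncard = 2
      have hA'2 : A'.ncard = 2 := le_antisymm hA2 h2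
      rw [hA'2] at hIcard
      have hBc : (B'ᶜ).ncard = 3 := by omega
      obtain ⟨i, j, k, hij, hik, hjk, hijkeq⟩ := ncard_eq_three.1 hBc
      have hB'eq : B' = ({i, j, k}ᶜ : Set (Fin n)) := by rw [← compl_compl B', hijkeq]
      rw [hB'eq, cl2 hΘ hA'2 hij hik hjk] at hHcl
      exact Or.inr (Or.inr ⟨i, j, k, hij, hik, hjk,
        by rw [conv3' hy hxy i j k]; exact hHcl⟩)
  · rintro (⟨i, rfl⟩ | ⟨i, j, k, hij, hik, hjk, rfl⟩ | ⟨i, j, k, hij, hik, hjk, rfl⟩)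
    · rw [conv2 hy i i]
      exact isHyp_H1 hΘ i
    · rw [conv2' hy i j]
      exact isHyp_H2 hΘ hij (Ne.symm hik) (Ne.symm hjk)
    · rw [conv3' hy hxy i j k]
      exact isHyp_H3 hΘ hij hik hjk
end

section
/- For every n ≥ 2, a subset F of the ground set X ∪ Y of Θ_n is a corank-2 flat of Θ_n if and only if: (1) F = (X ∪ Y) − {y_i, y_j, y_k, y_l} for distinct i,j,k,l ∈ [n]; or (2) F = (Y − {y_i, y_j, y_k}) ∪ {x_l} for distinct i,j,k,l ∈ [n]; or (3) F = (Y − {y_i, y_j, y_k}) ∪ {x_i} for distinct i,j,k ∈ [n]; or (4) F = Y − {y_i, y_j} for distinct i,j ∈ [n]. -/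
open Matroid Set

variable {α : Type*}

private lemma mRk_le_of {M : Matroid α} {X : Set α} {m : ℕ}
    (h : ∀ J, M.Indep J → J ⊆ X → J.ncard ≤ m) : mRk M X ≤ m :=
  csSup_le ⟨0, ∅, M.empty_indep, empty_subset _, Set.ncard_empty _⟩
    (by rintro k ⟨J, hJ, hJX, rfl⟩; exact h J hJ hJX)

private lemma ncard_le_mRk {M : Matroid α} {X I : Set α} {b : ℕ}
    (hI : M.Indep I) (hIX : I ⊆ X) (hub : ∀ J, M.Indep J → J.ncard ≤ b) :
    I.ncard ≤ mRk M X :=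
  le_csSup ⟨b, by rintro k ⟨J, hJ, _, rfl⟩; exact hub J hJ⟩ ⟨I, hI, hIX, rfl⟩

private lemma mRk_eq_of {M : Matroid α} {X I : Set α}
    (hI : M.Indep I) (hIX : I ⊆ X)
    (hub : ∀ J, M.Indep J → J ⊆ X → J.ncard ≤ I.ncard) : mRk M X = I.ncard :=
  le_antisymm (mRk_le_of hub)
    (le_csSup ⟨I.ncard, by rintro k ⟨J, hJ, hJX, rfl⟩; exact hub J hJ hJX⟩ ⟨I, hI, hIX, rfl⟩)

private lemma flat_of_aux {M : Matroid α} {F I : Set α}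
    (hFE : F ⊆ M.E) (hI : M.Indep I) (hIF : I ⊆ F)
    (hspan : ∀ e ∈ F, e ∉ I → ¬ M.Indep (insert e I))
    (hins : ∀ e ∈ M.E, e ∉ F → M.Indep (insert e I)) : M.IsFlat F := by
  have hIE : I ⊆ M.E := hI.subset_ground
  have hbasis : M.IsBasis I F := by
    rw [isBasis_iff_indep_subset_closure]
    refine ⟨hI, hIF, fun e he => ?_⟩
    by_cases heI : e ∈ I
    · exact M.subset_closure I hIE heI
    · exact hI.mem_closure_iff.mpr (Or.inl ⟨hspan e he heI, insert_subset (hFE he) hIE⟩)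
  refine ⟨fun I' X hI'F hI'X => ?_, hFE⟩
  have hXc : X ⊆ M.closure I := by
    have h2 := (isBasis_iff_indep_subset_closure.mp hI'X).2.2
    rwa [hI'F.closure_eq_closure, ← hbasis.closure_eq_closure] at h2
  intro e heX
  rcases hI.mem_closure_iff.mp (hXc heX) with hdep | heI
  · by_contra heF
    exact hdep.not_indep (hins e (hdep.subset_ground (mem_insert _ _)) heF)
  · exact hIF heI

private lemma exists3_of_ncard {β : Type*} {S : Set β} (hS : S.Finite) (h : 3 ≤ S.ncard) :
    ∃ a b c, a ∈ S ∧ b ∈ S ∧ c ∈ S ∧ a ≠ b ∧ a ≠ c ∧ b ≠ c := by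
  obtain ⟨a, ha⟩ := Set.nonempty_of_ncard_ne_zero (s := S) (by omega)
  have h1 : (S \ {a}).ncard = S.ncard - 1 := Set.ncard_diff_singleton_of_mem ha
  obtain ⟨b, hb⟩ := Set.nonempty_of_ncard_ne_zero (s := S \ {a}) (by omega)
  have h2 : ((S \ {a}) \ {b}).ncard = (S \ {a}).ncard - 1 :=
    Set.ncard_diff_singleton_of_mem hb
  obtain ⟨c, hc⟩ := Set.nonempty_of_ncard_ne_zero (s := (S \ {a}) \ {b}) (by omega)
  refine ⟨a, b, c, ha, hb.1, hc.1.1, ?_, ?_, ?_⟩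
  · rintro rfl; exact hb.2 rfl
  · rintro rfl; exact hc.1.2 rfl
  · rintro rfl; exact hc.2 rfl

private lemma ncard_eq_four {β : Type*} {S : Set β} (hS : S.Finite) (h : S.ncard = 4) :
    ∃ a b c d, a ≠ b ∧ a ≠ c ∧ a ≠ d ∧ b ≠ c ∧ b ≠ d ∧ c ≠ d ∧ S = {a, b, c, d} := by
  obtain ⟨a, ha⟩ := Set.nonempty_of_ncard_ne_zero (s := S) (by omega)
  have h1 : (S \ {a}).ncard = 3 := by
    rw [Set.ncard_diff_singleton_of_mem ha, h]
  obtain ⟨b, c, d, hbc, hbd, hcd, hS'⟩ := Set.ncard_eq_three.mp h1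
  have hab : a ∉ ({b, c, d} : Set β) := by rw [← hS']; simp
  simp only [mem_insert_iff, mem_singleton_iff, not_or] at hab
  refine ⟨a, b, c, d, hab.1, hab.2.1, hab.2.2, hbc, hbd, hcd, ?_⟩
  have hiS : S = insert a (S \ {a}) := by
    rw [Set.insert_diff_singleton, Set.insert_eq_self.mpr ha]
  rw [hiS, hS']

/-- The corank-2 flats of `Θ_n` for `n ≥ 2`. -/
theorem theta_corank2_flats (n : ℕ) (hn : 2 ≤ n) (x y : Fin n → α) (Θ : Matroid α)
    (hΘ : IsTheta n x y Θ) :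
    ∀ F ⊆ Set.range x ∪ Set.range y, (IsCr2Flat Θ F ↔
      (∃ i j k l, i ≠ j ∧ i ≠ k ∧ i ≠ l ∧ j ≠ k ∧ j ≠ l ∧ k ≠ l ∧
        F = (Set.range x ∪ Set.range y) \ {y i, y j, y k, y l}) ∨
      (∃ i j k l, i ≠ j ∧ i ≠ k ∧ i ≠ l ∧ j ≠ k ∧ j ≠ l ∧ k ≠ l ∧
        F = (Set.range y \ {y i, y j, y k}) ∪ {x l}) ∨
      (∃ i j k, i ≠ j ∧ i ≠ k ∧ j ≠ k ∧
        F = (Set.range y \ {y i, y j, y k}) ∪ {x i}) ∨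
      (∃ i j, i ≠ j ∧ F = Set.range y \ {y i, y j})) := by
  obtain ⟨hxinj, hyinj, hxy, hE, hB⟩ := hΘ
  have hXfin : (Set.range x).Finite := Set.finite_range x
  have hYfin : (Set.range y).Finite := Set.finite_range y
  have hEfin : (Set.range x ∪ Set.range y).Finite := hXfin.union hYfin
  have hyim : ∀ S : Set (Fin n), (y '' S).ncard = S.ncard :=
    fun S => Set.ncard_image_of_injective S hyinj
  have hxim : ∀ S : Set (Fin n), (x '' S).ncard = S.ncard :=
    fun S => Set.ncard_image_of_injective S hxinj
  have hdisj : ∀ P Q : Set (Fin n), Disjoint (x '' P) (y '' Q) := by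
    intro P Q
    rw [Set.disjoint_left]
    rintro a ⟨i, -, rfl⟩ ⟨j, -, hj⟩
    exact hxy i j hj.symm
  have hcardPQ : ∀ P Q : Set (Fin n), (x '' P ∪ y '' Q).ncard = P.ncard + Q.ncard := by
    intro P Q
    rw [Set.ncard_union_eq (hdisj P Q) ((P.toFinite).image x) ((Q.toFinite).image y),
      hxim, hyim]
  have hydiff : ∀ S : Set (Fin n), Set.range y \ y '' S = y '' Sᶜ := by
    intro S
    ext e
    constructor
    · rintro ⟨⟨t, rfl⟩, ht⟩
      exact ⟨t, fun hts => ht ⟨t, hts, rfl⟩, rfl⟩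
    · rintro ⟨t, htS, rfl⟩
      refine ⟨⟨t, rfl⟩, ?_⟩
      rintro ⟨s, hsS, hst⟩
      exact htS (hyinj hst ▸ hsS)
  have hcompl : ∀ S : Set (Fin n), S.ncard + Sᶜ.ncard = n := by
    intro S
    rw [Set.ncard_add_ncard_compl]
    simp
  have hYbase : Θ.IsBase (Set.range y) := (hB _).mpr (Or.inl rfl)
  have hYcard : (Set.range y).ncard = n := by
    rw [← Set.image_univ, hyim, Set.ncard_univ]
    simp
  have hbase_card : ∀ B, Θ.IsBase B → B.ncard = n := by
    intro B hB'
    rcases (hB B).mp hB' with rfl | ⟨i, j, hij, rfl⟩ | ⟨P, Q, hP, hQ, rfl⟩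
    · exact hYcard
    · have h1 : x j ∉ Set.range y \ {y i} := by
        rintro ⟨⟨t, ht⟩, -⟩
        exact hxy j t ht.symm
      rw [Set.union_singleton, Set.ncard_insert_of_notMem h1 hYfin.diff,
        Set.ncard_diff_singleton_of_mem (Set.mem_range_self i), hYcard]
      omega
    · rw [hydiff, Set.union_comm, hcardPQ, hQ]
      have := hcompl P
      omega
  have hindep_le : ∀ J, Θ.Indep J → J.ncard ≤ n := by
    intro J hJ
    obtain ⟨B, hB', hJB⟩ := indep_iff.mp hJ
    have hBfin : B.Finite := hEfin.subset (hE ▸ hB'.subset_ground)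
    calc J.ncard ≤ B.ncard := Set.ncard_le_ncard hJB hBfin
    _ = n := hbase_card B hB'
  have hrank : mRank Θ = n := by
    have heq := mRk_eq_of hYbase.indep hYbase.subset_ground
      (fun J hJ _ => le_of_le_of_eq (hindep_le J hJ) hYcard.symm)
    rw [mRank, heq, hYcard]
  have hL1 : ∀ I : Set α, I ⊆ Set.range y → Θ.Indep I := fun I hI => hYbase.indep.subset hI
  have hL2 : ∀ (j : Fin n) (Q : Set (Fin n)) (i : Fin n), i ∉ Q → i ≠ j →
      Θ.Indep ({x j} ∪ y '' Q) := by
    intro j Q i hiQ hij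
    have hb : Θ.IsBase ((Set.range y \ {y i}) ∪ {x j}) :=
      (hB _).mpr (Or.inr (Or.inl ⟨i, j, hij, rfl⟩))
    refine hb.indep.subset ?_
    rintro e (he | ⟨t, htQ, rfl⟩)
    · exact Or.inr he
    · refine Or.inl ⟨⟨t, rfl⟩, ?_⟩
      intro h
      exact hiQ ((hyinj (Set.mem_singleton_iff.mp h)) ▸ htQ)
  have hL3 : ∀ (a b p q : Fin n) (Q : Set (Fin n)), a ≠ b → p ≠ q → p ∉ Q → q ∉ Q →
      Θ.Indep (x '' {a, b} ∪ y '' Q) := by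
    intro a b p q Q hab hpq hpQ hqQ
    have hb : Θ.IsBase ((Set.range y \ y '' {p, q}) ∪ x '' {a, b}) :=
      (hB _).mpr (Or.inr (Or.inr ⟨{p, q}, {a, b}, Set.ncard_pair hpq, Set.ncard_pair hab, rfl⟩))
    refine hb.indep.subset ?_
    rintro e (he | ⟨t, htQ, rfl⟩)
    · exact Or.inr he
    · refine Or.inl ⟨⟨t, rfl⟩, ?_⟩
      rintro ⟨s, hs, hst⟩
      rcases hyinj hst ▸ hs with rfl | rfl
      · exact hpQ htQ
      · exact hqQ htQ
  have hD1 : ∀ (a b c : Fin n) (I : Set α), a ≠ b → a ≠ c → b ≠ c →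
      x a ∈ I → x b ∈ I → x c ∈ I → ¬ Θ.Indep I := by
    intro a b c I hab hac hbc haI hbI hcI hI
    obtain ⟨B, hB', hIB⟩ := indep_iff.mp hI
    rcases (hB B).mp hB' with rfl | ⟨i, j, hij, rfl⟩ | ⟨P, Q, hP, hQ, rfl⟩
    · obtain ⟨t, ht⟩ := hIB haI
      exact hxy a t ht.symm
    · have hmem : ∀ t : Fin n, x t ∈ (Set.range y \ {y i}) ∪ {x j} → t = j := by
        rintro t (⟨⟨s, hs⟩, -⟩ | ht)
        · exact absurd hs.symm (hxy t s)
        · exact hxinj (Set.mem_singleton_iff.mp ht)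
      exact hab ((hmem a (hIB haI)).trans (hmem b (hIB hbI)).symm)
    · have hmem : ∀ t : Fin n, x t ∈ (Set.range y \ y '' P) ∪ x '' Q → t ∈ Q := by
        rintro t (⟨⟨s, hs⟩, -⟩ | ⟨s, hsQ, hst⟩)
        · exact absurd hs.symm (hxy t s)
        · exact hxinj hst ▸ hsQ
      have hsub : ({a, b, c} : Set (Fin n)) ⊆ Q := by
        rintro t (rfl | rfl | rfl)
        exacts [hmem _ (hIB haI), hmem _ (hIB hbI), hmem _ (hIB hcI)]
      have h3 : ({a, b, c} : Set (Fin n)).ncard = 3 := by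
        rw [Set.ncard_insert_of_notMem (by simp [hab, hac]) (Set.toFinite _),
          Set.ncard_pair hbc]
      have hle := Set.ncard_le_ncard hsub Q.toFinite
      omega
  have hdecomp : ∀ S : Set α, S ⊆ Set.range x ∪ Set.range y →
      S = x '' {i | x i ∈ S} ∪ y '' {i | y i ∈ S} := by
    intro S hS
    apply Set.Subset.antisymm
    · intro e he
      rcases hS he with ⟨i, rfl⟩ | ⟨i, rfl⟩
      · exact Or.inl ⟨i, he, rfl⟩
      · exact Or.inr ⟨i, he, rfl⟩
    · rintro e (⟨i, hi, rfl⟩ | ⟨i, hi, rfl⟩) <;> exact hi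
  have hub2 : ∀ (Q0 : Set (Fin n)) (J : Set α), Θ.Indep J → J ⊆ Set.range x ∪ y '' Q0 →
      J.ncard ≤ 2 + Q0.ncard := by
    intro Q0 J hJ hJF
    have hJE : J ⊆ Set.range x ∪ Set.range y :=
      hJF.trans (Set.union_subset_union_right _ (Set.image_subset_range _ _))
    have hJd := hdecomp J hJE
    have hQsub : {i | y i ∈ J} ⊆ Q0 := by
      intro m hm
      rcases hJF hm with ⟨t, ht⟩ | ⟨t, htQ, ht⟩
      · exact absurd ht (hxy t m)
      · exact (hyinj ht) ▸ htQ
    have hPle : {i | x i ∈ J}.ncard ≤ 2 := by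
      by_contra hgt
      obtain ⟨a, b, c, ha, hb, hc, hab, hac, hbc⟩ :=
        exists3_of_ncard (S := {i | x i ∈ J}) (Set.toFinite _) (by omega)
      exact hD1 a b c J hab hac hbc ha hb hc hJ
    have hcard : J.ncard = {i | x i ∈ J}.ncard + {i | y i ∈ J}.ncard := by
      conv_lhs => rw [hJd]
      exact hcardPQ _ _
    rw [hcard]
    exact add_le_add hPle (Set.ncard_le_ncard hQsub Q0.toFinite)
  have pick3 : ∀ i j k m a : Fin n, i ≠ j → i ≠ k → j ≠ k →
      ∃ c, (c = i ∨ c = j ∨ c = k) ∧ c ≠ m ∧ c ≠ a := by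
    intro i j k m a hij hik hjk
    by_cases h1 : i ≠ m ∧ i ≠ a
    · exact ⟨i, Or.inl rfl, h1.1, h1.2⟩
    by_cases h2 : j ≠ m ∧ j ≠ a
    · exact ⟨j, Or.inr (Or.inl rfl), h2.1, h2.2⟩
    push_neg at h1 h2
    refine ⟨k, Or.inr (Or.inr rfl), ?_, ?_⟩
    · rintro rfl
      exact hij ((h1 hik).trans (h2 hjk).symm)
    · rintro rfl
      have him : i = m := by
        by_contra h
        exact hik (h1 h)
      have hjm : j = m := by
        by_contra h
        exact hjk (h2 h)
      exact hij (him.trans hjm.symm)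
  have pick4 : ∀ i j k l m : Fin n, i ≠ j → k ≠ l → i ≠ k → i ≠ l → j ≠ k → j ≠ l →
      ∃ p q, p ≠ q ∧ p ≠ m ∧ q ≠ m ∧ (p = i ∨ p = j ∨ p = k ∨ p = l) ∧
        (q = i ∨ q = j ∨ q = k ∨ q = l) := by
    intro i j k l m hij hkl hik hil hjk hjl
    by_cases h1 : m = i ∨ m = j
    · refine ⟨k, l, hkl, ?_, ?_, by tauto, by tauto⟩
      · rintro rfl
        rcases h1 with rfl | rfl
        · exact hik rfl
        · exact hjk rfl
      · rintro rfl
        rcases h1 with rfl | rfl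
        · exact hil rfl
        · exact hjl rfl
    · push_neg at h1
      exact ⟨i, j, hij, Ne.symm h1.1, Ne.symm h1.2, by tauto, by tauto⟩
  have hEdiff : ∀ S : Set (Fin n),
      (Set.range x ∪ Set.range y) \ y '' S = Set.range x ∪ y '' Sᶜ := by
    intro S
    rw [Set.union_diff_distrib, hydiff]
    congr 1
    apply Set.Subset.antisymm Set.diff_subset
    rw [Set.subset_diff]
    refine ⟨subset_rfl, ?_⟩
    have h := hdisj Set.univ S
    rwa [Set.image_univ] at h
  have hsubYE : ∀ Q : Set (Fin n), y '' Q ⊆ Θ.E := by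
    intro Q
    rw [hE]
    exact (Set.image_subset_range y Q).trans Set.subset_union_right
  -- SHAPE A : `y '' Q` with `Qᶜ.ncard = 2`
  have shapeA : ∀ Q : Set (Fin n), Qᶜ.ncard = 2 → IsCr2Flat Θ (y '' Q) := by
    intro Q hQ2
    have hIindep : Θ.Indep (y '' Q) := hL1 _ (Set.image_subset_range y Q)
    have hmRk : mRk Θ (y '' Q) = Q.ncard := by
      have heq := mRk_eq_of hIindep subset_rfl
        (fun J hJ hJX => Set.ncard_le_ncard hJX ((Q.toFinite).image y))
      rw [heq, hyim]
    constructor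
    · refine flat_of_aux (hsubYE Q) hIindep subset_rfl (fun e he he' => absurd he he') ?_
      intro e heE heF
      rw [hE] at heE
      rcases heE with ⟨m, rfl⟩ | ⟨m, rfl⟩
      · obtain ⟨p, hp, q, hq, hpq⟩ := (Set.one_lt_ncard (Set.toFinite Qᶜ)).mp (by omega)
        rw [← Set.singleton_union]
        by_cases hpm : p = m
        · exact hL2 m Q q hq (by rw [← hpm]; exact hpq.symm)
        · exact hL2 m Q p hp hpm
      · exact hL1 _ (Set.insert_subset (Set.mem_range_self m) (Set.image_subset_range y Q))
    · rw [hrank, hmRk]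
      have := hcompl Q
      omega
  -- SHAPE B : `{x l} ∪ y '' Q` with `Qᶜ.ncard = 3`
  have shapeB : ∀ (Q : Set (Fin n)) (l : Fin n), Qᶜ.ncard = 3 →
      IsCr2Flat Θ ({x l} ∪ y '' Q) := by
    intro Q l hQ3
    obtain ⟨i, j, k, hij, hik, hjk, hQc⟩ := Set.ncard_eq_three.mp hQ3
    have htriple : ∀ t : Fin n, (t = i ∨ t = j ∨ t = k) → t ∉ Q := by
      intro t ht htQ
      have : t ∈ Qᶜ := by rw [hQc]; simpa using ht
      exact this htQ
    have hFE : {x l} ∪ y '' Q ⊆ Θ.E := by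
      rw [hE]
      refine Set.union_subset ?_
        ((Set.image_subset_range y Q).trans Set.subset_union_right)
      simp only [Set.singleton_subset_iff]
      exact Or.inl (Set.mem_range_self l)
    have hIindep : Θ.Indep ({x l} ∪ y '' Q) := by
      obtain ⟨c, hc, hcl, -⟩ := pick3 i j k l l hij hik hjk
      exact hL2 l Q c (htriple c hc) hcl
    have hmRk : mRk Θ ({x l} ∪ y '' Q) = 1 + Q.ncard := by
      have hF2 : {x l} ∪ y '' Q = x '' {l} ∪ y '' Q := by rw [Set.image_singleton]
      have heq := mRk_eq_of hIindep subset_rfl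
        (fun J hJ hJX => Set.ncard_le_ncard hJX (hEfin.subset (hFE.trans_eq hE)))
      rw [heq, hF2, hcardPQ, Set.ncard_singleton]
    constructor
    · refine flat_of_aux hFE hIindep subset_rfl (fun e he he' => absurd he he') ?_
      intro e heE heF
      rw [hE] at heE
      rcases heE with ⟨m, rfl⟩ | ⟨m, rfl⟩
      · have hml : m ≠ l := by
          rintro rfl
          exact heF (Or.inl rfl)
        have hrw : insert (x m) ({x l} ∪ y '' Q) = x '' {m, l} ∪ y '' Q := by
          rw [Set.image_pair, Set.insert_union]
        rw [hrw]
        exact hL3 m l i j Q hml hij (htriple i (Or.inl rfl)) (htriple j (Or.inr (Or.inl rfl)))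
      · have hmQ : m ∉ Q := by
          intro hm
          exact heF (Or.inr ⟨m, hm, rfl⟩)
        have hrw : insert (y m) ({x l} ∪ y '' Q) = {x l} ∪ y '' (insert m Q) := by
          rw [Set.image_insert_eq, Set.union_insert]
        rw [hrw]
        obtain ⟨c, hc, hcm, hcl⟩ := pick3 i j k m l hij hik hjk
        refine hL2 l (insert m Q) c ?_ hcl
        intro hcmem
        rcases hcmem with rfl | hcQ
        · exact hcm rfl
        · exact htriple c hc hcQ
    · rw [hrank, hmRk]
      have := hcompl Q
      omega
  -- SHAPE C : `range x ∪ y '' Q` with `Qᶜ.ncard = 4`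
  have shapeC : ∀ Q : Set (Fin n), Qᶜ.ncard = 4 →
      IsCr2Flat Θ (Set.range x ∪ y '' Q) := by
    intro Q hQ4
    obtain ⟨i, j, k, l, hij, hik, hil, hjk, hjl, hkl, hQc⟩ :=
      ncard_eq_four (Set.toFinite Qᶜ) hQ4
    have hquad : ∀ t : Fin n, (t = i ∨ t = j ∨ t = k ∨ t = l) → t ∉ Q := by
      intro t ht htQ
      have : t ∈ Qᶜ := by rw [hQc]; simpa using ht
      exact this htQ
    have hFE : Set.range x ∪ y '' Q ⊆ Θ.E := by
      rw [hE]
      exact Set.union_subset_union_right _ (Set.image_subset_range y Q)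
    have hIindep : Θ.Indep (x '' {i, j} ∪ y '' Q) :=
      hL3 i j k l Q hij hkl (hquad k (by tauto)) (hquad l (by tauto))
    have hIF : x '' {i, j} ∪ y '' Q ⊆ Set.range x ∪ y '' Q :=
      Set.union_subset_union_left _ (Set.image_subset_range x _)
    have hIcard : (x '' {i, j} ∪ y '' Q).ncard = 2 + Q.ncard := by
      rw [hcardPQ, Set.ncard_pair hij]
    have hmRk : mRk Θ (Set.range x ∪ y '' Q) = 2 + Q.ncard := by
      have heq := mRk_eq_of hIindep hIF
        (fun J hJ hJX => (hub2 Q J hJ hJX).trans_eq hIcard.symm)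
      rw [heq, hIcard]
    constructor
    · refine flat_of_aux hFE hIindep hIF ?_ ?_
      · intro e he heI
        rcases he with ⟨m, rfl⟩ | heY
        · have hmi : m ≠ i := by
            rintro rfl
            exact heI (Or.inl ⟨m, Or.inl rfl, rfl⟩)
          have hmj : m ≠ j := by
            rintro rfl
            exact heI (Or.inl ⟨m, Or.inr rfl, rfl⟩)
          refine hD1 i j m _ hij (Ne.symm hmi) (Ne.symm hmj) ?_ ?_ (Set.mem_insert _ _)
          · exact Set.mem_insert_of_mem _ (Or.inl ⟨i, Or.inl rfl, rfl⟩)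
          · exact Set.mem_insert_of_mem _ (Or.inl ⟨j, Or.inr rfl, rfl⟩)
        · exact absurd (Or.inr heY) heI
      · intro e heE heF
        rw [hE] at heE
        rcases heE with ⟨m, rfl⟩ | ⟨m, rfl⟩
        · exact absurd (Or.inl (Set.mem_range_self m)) heF
        · have hmQ : m ∉ Q := fun hm => heF (Or.inr ⟨m, hm, rfl⟩)
          have hrw : insert (y m) (x '' {i, j} ∪ y '' Q) = x '' {i, j} ∪ y '' (insert m Q) := by
            rw [show y '' (insert m Q) = insert (y m) (y '' Q) from Set.image_insert_eq,
              Set.union_insert]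
          rw [hrw]
          obtain ⟨p, q, hpq, hpm, hqm, hpmem, hqmem⟩ := pick4 i j k l m hij hkl hik hil hjk hjl
          refine hL3 i j p q (insert m Q) hij hpq ?_ ?_
          · rintro (rfl | hpQ)
            · exact hpm rfl
            · exact hquad p hpmem hpQ
          · rintro (rfl | hqQ)
            · exact hqm rfl
            · exact hquad q hqmem hqQ
    · rw [hrank, hmRk]
      have := hcompl Q
      omega
  -- main statement
  have main : ∀ F ⊆ Set.range x ∪ Set.range y, (IsCr2Flat Θ F ↔
      (∃ i j k l, i ≠ j ∧ i ≠ k ∧ i ≠ l ∧ j ≠ k ∧ j ≠ l ∧ k ≠ l ∧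
        F = (Set.range x ∪ Set.range y) \ {y i, y j, y k, y l}) ∨
      (∃ i j k l, i ≠ j ∧ i ≠ k ∧ i ≠ l ∧ j ≠ k ∧ j ≠ l ∧ k ≠ l ∧
        F = (Set.range y \ {y i, y j, y k}) ∪ {x l}) ∨
      (∃ i j k, i ≠ j ∧ i ≠ k ∧ j ≠ k ∧
        F = (Set.range y \ {y i, y j, y k}) ∪ {x i}) ∨
      (∃ i j, i ≠ j ∧ F = Set.range y \ {y i, y j})) := by
    intro F hFE
    constructor
    · rintro ⟨hflat, hr⟩
      rw [hrank] at hr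
      set P := {i | x i ∈ F} with hPdef
      set Q := {i | y i ∈ F} with hQdef
      have hFd : F = x '' P ∪ y '' Q := hdecomp F hFE
      have hFfin : F.Finite := hEfin.subset hFE
      have hbdd : ∀ I : Set α, Θ.Indep I → I ⊆ F → I.ncard ≤ mRk Θ F :=
        fun I hI hIF => ncard_le_mRk hI hIF hindep_le
      have hyQF : y '' Q ⊆ F := by
        rintro e ⟨t, ht, rfl⟩
        exact ht
      have hnotbig : ¬ (n ≤ Q.ncard + 1) := by
        intro hbig
        have hle := hbdd (y '' Q) (hL1 _ (Set.image_subset_range y Q)) hyQF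
        rw [hyim] at hle
        omega
      rcases Set.eq_empty_or_nonempty P with hPe | ⟨a, ha⟩
      · -- P = ∅ : case (4)
        have hFy : F = y '' Q := by
          rw [hFd, hPe]
          simp
        have hmRk : mRk Θ F = Q.ncard := by
          have heq := mRk_eq_of (hFy ▸ hL1 _ (Set.image_subset_range y Q) : Θ.Indep F)
            subset_rfl (fun J hJ hJX => Set.ncard_le_ncard hJX hFfin)
          rw [heq, hFy, hyim]
        have hQc2 : Qᶜ.ncard = 2 := by
          have := hcompl Q
          omega
        obtain ⟨i, j, hij, hQc⟩ := Set.ncard_eq_two.mp hQc2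
        refine Or.inr (Or.inr (Or.inr ⟨i, j, hij, ?_⟩))
        have himg : y '' ({i, j} : Set (Fin n)) = {y i, y j} := Set.image_pair y i j
        rw [← himg, ← hQc, hydiff, compl_compl]
        exact hFy
      · have haF : x a ∈ F := ha
        by_cases hbex : ∃ b ∈ P, b ≠ a
        · -- two x's in F : case (1)
          obtain ⟨b, hb, hba⟩ := hbex
          have hpair : Θ.Indep {x a, x b} := by
            have h0 : (⟨0, by omega⟩ : Fin n) ≠ ⟨1, by omega⟩ := by simp [Fin.ext_iff]
            have hi := hL3 a b ⟨0, by omega⟩ ⟨1, by omega⟩ ∅ (Ne.symm hba) h0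
              (Set.notMem_empty _) (Set.notMem_empty _)
            rwa [Set.image_pair, Set.image_empty, Set.union_empty] at hi
          have hxall : ∀ k, x k ∈ F := by
            intro k
            by_cases hk : k = a
            · exact hk ▸ haF
            by_cases hk' : k = b
            · exact hk' ▸ hb
            have hdep : Θ.Dep (insert (x k) {x a, x b}) := by
              refine ⟨hD1 a b k _ (Ne.symm hba) (fun h => hk h.symm) (fun h => hk' h.symm)
                (Set.mem_insert_of_mem _ (Or.inl rfl))
                (Set.mem_insert_of_mem _ (Or.inr rfl)) (Set.mem_insert _ _), ?_⟩
              rw [hE]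
              intro e he
              simp only [Set.mem_insert_iff, Set.mem_singleton_iff] at he
              rcases he with rfl | rfl | rfl <;> exact Or.inl (Set.mem_range_self _)
            have hk2 : x k ∈ Θ.closure {x a, x b} := hpair.mem_closure_iff.mpr (Or.inl hdep)
            have hsub2 : Θ.closure {x a, x b} ⊆ Θ.closure F := by
              apply Θ.closure_subset_closure
              intro e he
              rcases he with rfl | he
              · exact haF
              · rw [Set.mem_singleton_iff] at he
                exact he ▸ hb
            rw [hflat.closure] at hsub2
            exact hsub2 hk2
          have hPu : P = Set.univ := Set.eq_univ_of_forall (fun i => hxall i)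
          have hFx : F = Set.range x ∪ y '' Q := by
            rw [hFd, hPu, Set.image_univ]
          have hub : mRk Θ F ≤ 2 + Q.ncard :=
            mRk_le_of (fun J hJ hJX => hub2 Q J hJ (hFx ▸ hJX))
          have hc2 : 1 < Qᶜ.ncard := by
            have := hcompl Q
            omega
          obtain ⟨p, hp, q, hq, hpq⟩ := (Set.one_lt_ncard (Set.toFinite Qᶜ)).mp hc2
          have hJind : Θ.Indep (x '' {a, b} ∪ y '' Q) := hL3 a b p q Q (Ne.symm hba) hpq hp hq
          have hJsub : x '' {a, b} ∪ y '' Q ⊆ F := by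
            rw [hFx]
            exact Set.union_subset_union_left _ (Set.image_subset_range x _)
          have hJle := hbdd _ hJind hJsub
          rw [hcardPQ, Set.ncard_pair (Ne.symm hba)] at hJle
          have hQc4 : Qᶜ.ncard = 4 := by
            have := hcompl Q
            omega
          obtain ⟨i, j, k, l, hij, hik, hil, hjk, hjl, hkl, hQc⟩ :=
            ncard_eq_four (Set.toFinite _) hQc4
          refine Or.inl ⟨i, j, k, l, hij, hik, hil, hjk, hjl, hkl, ?_⟩
          have himg : y '' ({i, j, k, l} : Set (Fin n)) = {y i, y j, y k, y l} := by
            simp [Set.image_insert_eq]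
          rw [← himg, ← hQc, hEdiff, compl_compl]
          exact hFx
        · -- exactly one x : cases (2)/(3)
          push_neg at hbex
          have hPa : P = {a} := by
            apply Set.Subset.antisymm
            · intro t ht
              exact hbex t ht
            · intro t ht
              rw [Set.mem_singleton_iff] at ht
              exact ht ▸ ha
          have hFa : F = {x a} ∪ y '' Q := by
            rw [hFd, hPa, Set.image_singleton]
          have hc2 : 1 < Qᶜ.ncard := by
            have := hcompl Q
            omega
          obtain ⟨p, hp, q, hq, hpq⟩ := (Set.one_lt_ncard (Set.toFinite Qᶜ)).mp hc2
          obtain ⟨i0, hi0Q, hi0a⟩ : ∃ c, c ∉ Q ∧ c ≠ a := by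
            by_cases hpa : p = a
            · refine ⟨q, hq, ?_⟩
              rw [← hpa]
              exact hpq.symm
            · exact ⟨p, hp, hpa⟩
          have hFind : Θ.Indep F := by
            rw [hFa]
            exact hL2 a Q i0 hi0Q hi0a
          have hFc : F.ncard = 1 + Q.ncard := by
            rw [hFa, show ({x a} : Set α) = x '' {a} from (Set.image_singleton).symm,
              hcardPQ, Set.ncard_singleton]
          have hmRk : mRk Θ F = 1 + Q.ncard := by
            have heq := mRk_eq_of hFind subset_rfl
              (fun J hJ hJX => Set.ncard_le_ncard hJX hFfin)
            rw [heq, hFc]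
          have hQc3 : Qᶜ.ncard = 3 := by
            have := hcompl Q
            omega
          obtain ⟨i, j, k, hij, hik, hjk, hQc⟩ := Set.ncard_eq_three.mp hQc3
          have hYQ : Set.range y \ {y i, y j, y k} = y '' Q := by
            have himg : y '' ({i, j, k} : Set (Fin n)) = {y i, y j, y k} := by
              simp [Set.image_insert_eq]
            rw [← himg, ← hQc, hydiff, compl_compl]
          by_cases haQ : a ∈ Q
          · have hne : ∀ t, t ∈ Qᶜ → t ≠ a := fun t ht h => ht (h ▸ haQ)
            have hiQ : i ∈ Qᶜ := by
              rw [hQc]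
              simp
            have hjQ : j ∈ Qᶜ := by
              rw [hQc]
              simp
            have hkQ : k ∈ Qᶜ := by
              rw [hQc]
              simp
            refine Or.inr (Or.inl ⟨i, j, k, a, hij, hik, hne i hiQ, hjk, hne j hjQ, hne k hkQ, ?_⟩)
            rw [hYQ, Set.union_comm]
            exact hFa
          · have haQc : a ∈ ({i, j, k} : Set (Fin n)) := by
              rw [← hQc]
              exact haQ
            rcases haQc with rfl | rfl | rfl
            · refine Or.inr (Or.inr (Or.inl ⟨a, j, k, hij, hik, hjk, ?_⟩))
              rw [hYQ, Set.union_comm]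
              exact hFa
            · refine Or.inr (Or.inr (Or.inl ⟨a, i, k, hij.symm, hjk, hik, ?_⟩))
              have hswap : ({y a, y i, y k} : Set α) = {y i, y a, y k} := by
                ext e
                simp only [Set.mem_insert_iff, Set.mem_singleton_iff]
                tauto
              rw [hswap, hYQ, Set.union_comm]
              exact hFa
            · refine Or.inr (Or.inr (Or.inl ⟨a, i, j, hik.symm, hjk.symm, hij, ?_⟩))
              have hswap : ({y a, y i, y j} : Set α) = {y i, y j, y a} := by
                ext e
                simp only [Set.mem_insert_iff, Set.mem_singleton_iff]
                tauto
              rw [hswap, hYQ, Set.union_comm]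
              exact hFa
    · rintro (⟨i, j, k, l, hij, hik, hil, hjk, hjl, hkl, rfl⟩ |
              ⟨i, j, k, l, hij, hik, hil, hjk, hjl, hkl, rfl⟩ |
              ⟨i, j, k, hij, hik, hjk, rfl⟩ | ⟨i, j, hij, rfl⟩)
      · have himg : y '' ({i, j, k, l} : Set (Fin n)) = {y i, y j, y k, y l} := by
          simp [Set.image_insert_eq]
        rw [← himg, hEdiff]
        apply shapeC
        rw [compl_compl, Set.ncard_insert_of_notMem (by simp [hij, hik, hil]) (Set.toFinite _),
          Set.ncard_insert_of_notMem (by simp [hjk, hjl]) (Set.toFinite _), Set.ncard_pair hkl]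
      · have himg : y '' ({i, j, k} : Set (Fin n)) = {y i, y j, y k} := by
          simp [Set.image_insert_eq]
        rw [← himg, hydiff, Set.union_comm]
        apply shapeB
        rw [compl_compl, Set.ncard_insert_of_notMem (by simp [hij, hik]) (Set.toFinite _),
          Set.ncard_pair hjk]
      · have himg : y '' ({i, j, k} : Set (Fin n)) = {y i, y j, y k} := by
          simp [Set.image_insert_eq]
        rw [← himg, hydiff, Set.union_comm]
        apply shapeB
        rw [compl_compl, Set.ncard_insert_of_notMem (by simp [hij, hik]) (Set.toFinite _),
          Set.ncard_pair hjk]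
      · have himg : y '' ({i, j} : Set (Fin n)) = {y i, y j} := Set.image_pair y i j
        rw [← himg, hydiff]
        apply shapeA
        rw [compl_compl]
        exact Set.ncard_pair hij
  exact main
end
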